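/- arXiv:2205.02045 — 6 statements merged into one kernel-verified Lean document; each statement's English description precedes it below -/
import Mathlib

section
/- Let x ≥ 1 be an unbounded real-valued random variable and let X be the linear space L^∞ + span{x·1_A : A ∈ F}. Then X is decomposable but not solid; in particular √x ∉ X although √x ≤ x pointwise. -/
open MeasureTheory

private def SpanSet {Ω : Type*} [MeasurableSpace Ω] (x : Ω → ℝ) : Set (Ω → ℝ) :=
  {h : Ω → ℝ | ∃ A : Set Ω, MeasurableSet A ∧ h = A.indicator x}

private lemma indicator_mem_span {Ω : Type*} [MeasurableSpace Ω] (x : Ω → ℝ)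
    {s : Ω → ℝ} (hs : s ∈ Submodule.span ℝ (SpanSet x)) (A : Set Ω) (hA : MeasurableSet A) :
    A.indicator s ∈ Submodule.span ℝ (SpanSet x) := by
  induction hs using Submodule.span_induction with
  | mem h hh =>
      obtain ⟨B, hB, rfl⟩ := hh
      rw [Set.indicator_indicator]
      exact Submodule.subset_span ⟨A ∩ B, hA.inter hB, rfl⟩
  | zero => simp
  | add f g hf hg ihf ihg =>
      have : A.indicator (f + g) = A.indicator f + A.indicator g := by
        funext ω; by_cases h : ω ∈ A <;> simp [Set.indicator, h]
      rw [this]; exact Submodule.add_mem _ ihf ihg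
  | smul a f hf ihf =>
      have : A.indicator (a • f) = a • A.indicator f := by
        funext ω; by_cases h : ω ∈ A <;> simp [Set.indicator, h]
      rw [this]; exact Submodule.smul_mem _ _ ihf

private lemma span_rep {Ω : Type*} [MeasurableSpace Ω] (x : Ω → ℝ)
    {s : Ω → ℝ} (hs : s ∈ Submodule.span ℝ (SpanSet x)) :
    ∃ φ : Ω → ℝ, (Set.range φ).Finite ∧ s = fun ω => φ ω * x ω := by
  induction hs using Submodule.span_induction with
  | mem h hh =>
      obtain ⟨B, hB, rfl⟩ := hh
      refine ⟨B.indicator 1, Set.Finite.subset ((Set.finite_singleton (1:ℝ)).insert 0) ?_, ?_⟩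
      · rintro _ ⟨ω, rfl⟩
        by_cases h : ω ∈ B <;> simp [Set.indicator_of_mem, Set.indicator_of_notMem, h]
      · funext ω
        by_cases h : ω ∈ B
        · rw [Set.indicator_of_mem h, Set.indicator_of_mem h]; simp
        · rw [Set.indicator_of_notMem h, Set.indicator_of_notMem h]; simp
  | zero =>
      refine ⟨0, Set.Finite.subset (Set.finite_singleton 0) ?_, by funext ω; simp⟩
      rintro _ ⟨ω, rfl⟩; simp
  | add f g hf hg ihf ihg =>
      obtain ⟨φ, hφ, rfl⟩ := ihf
      obtain ⟨ψ, hψ, rfl⟩ := ihg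
      refine ⟨φ + ψ, ?_, by funext ω; simp [add_mul]⟩
      have : Set.range (φ + ψ) ⊆ Set.image2 (· + ·) (Set.range φ) (Set.range ψ) := by
        rintro _ ⟨ω, rfl⟩; exact ⟨φ ω, ⟨ω, rfl⟩, ψ ω, ⟨ω, rfl⟩, rfl⟩
      exact ((hφ.image2 _ hψ)).subset this
  | smul a f hf ihf =>
      obtain ⟨φ, hφ, rfl⟩ := ihf
      refine ⟨a • φ, ?_, by funext ω; simp [mul_assoc]⟩
      have : Set.range (a • φ) ⊆ (fun c => a * c) '' Set.range φ := by
        rintro _ ⟨ω, rfl⟩; exact ⟨φ ω, ⟨ω, rfl⟩, rfl⟩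
      exact (hφ.image _).subset this

private lemma sqrtLeSelf (a : ℝ) (h : 1 ≤ a) : Real.sqrt a ≤ a := by
  have h2 : a ≤ a ^ 2 := by nlinarith
  have := Real.sqrt_le_sqrt h2
  rwa [Real.sqrt_sq (by linarith)] at this

private noncomputable def bnd (C c : ℝ) : ℝ := if c = 0 then (C + 1) ^ 2 else max ((2 / |c|) ^ 2) ((2 * C + 2) / |c|)

private lemma keyLem (C : ℝ) (hC0 : 0 ≤ C) (c xv gv : ℝ) (hxv : 1 ≤ xv) (hg : |gv| ≤ C)
    (heq : Real.sqrt xv = gv + c * xv) : xv ≤ bnd C c := by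
  have hxv0 : (0:ℝ) ≤ xv := by linarith
  have hs0 : 0 ≤ Real.sqrt xv := Real.sqrt_nonneg _
  have hs2 : Real.sqrt xv ^ 2 = xv := Real.sq_sqrt hxv0
  have hgle : gv ≤ C := (abs_le.mp hg).2
  have hgge : -C ≤ gv := (abs_le.mp hg).1
  unfold bnd
  by_cases hc : c = 0
  · subst hc
    rw [if_pos rfl]
    have : Real.sqrt xv ≤ C := by rw [heq]; simpa using hgle
    nlinarith
  · simp only [if_neg hc]
    by_contra h
    push_neg at h
    have h1 : (2 / |c|) ^ 2 < xv := lt_of_le_of_lt (le_max_left _ _) h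
    have h2 : (2 * C + 2) / |c| < xv := lt_of_le_of_lt (le_max_right _ _) h
    have hcpos : 0 < |c| := abs_pos.mpr hc
    have hsge : 2 / |c| ≤ Real.sqrt xv := by
      have := Real.sqrt_le_sqrt h1.le
      rwa [Real.sqrt_sq (by positivity)] at this
    have habs : 2 ≤ |c| * Real.sqrt xv := by
      rw [div_le_iff₀ hcpos] at hsge; linarith [mul_comm (Real.sqrt xv) |c|]
    have hx2 : 2 * C + 2 ≤ |c| * xv := by
      rw [div_lt_iff₀ hcpos] at h2; linarith [mul_comm xv |c|]
    -- sqrt xv ≤ |c| * xv / 2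
    have hsmall : 2 * Real.sqrt xv ≤ |c| * xv := by nlinarith
    -- |gv| ≥ |c| * xv - sqrt xv
    have hgv : |c| * xv - Real.sqrt xv ≤ |gv| := by
      have h3 : |c * xv| - |Real.sqrt xv| ≤ |c * xv - Real.sqrt xv| := abs_sub_abs_le_abs_sub _ _
      have h4 : gv = Real.sqrt xv - c * xv := by linarith [heq]
      have h5 : |gv| = |c * xv - Real.sqrt xv| := by rw [h4, abs_sub_comm]
      rw [h5]
      calc |c| * xv - Real.sqrt xv = |c| * |xv| - |Real.sqrt xv|
            := by rw [abs_of_nonneg hxv0, abs_of_nonneg hs0]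
        _ = |c * xv| - |Real.sqrt xv| := by rw [abs_mul]
        _ ≤ _ := h3
    nlinarith

/-- For an unbounded random variable `x ≥ 1`, the space `X = L^∞ + span{x·1_A}` is
decomposable but not solid; in particular `√x ∉ X` although `√x ≤ x` a.s. -/
theorem stmt1 {Ω : Type*} [MeasurableSpace Ω] (P : Measure Ω) [IsProbabilityMeasure P]
    (x : Ω → ℝ) (hxmeas : Measurable x) (hx1 : ∀ᵐ ω ∂P, 1 ≤ x ω)
    (hunb : ¬ ∃ C : ℝ, ∀ᵐ ω ∂P, x ω ≤ C)
    (X : Set (Ω → ℝ))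
    (hX : X = {f : Ω → ℝ | ∃ g : Ω → ℝ, Measurable g ∧ (∃ C : ℝ, ∀ᵐ ω ∂P, |g ω| ≤ C) ∧
        ∃ s ∈ Submodule.span ℝ {h : Ω → ℝ | ∃ A : Set Ω, MeasurableSet A ∧ h = A.indicator x},
          f =ᵐ[P] g + s}) :
    -- X is decomposable
    (∀ u ∈ X, ∀ u' : Ω → ℝ, Measurable u' → (∃ C : ℝ, ∀ᵐ ω ∂P, |u' ω| ≤ C) →
        ∀ A : Set Ω, MeasurableSet A → (fun ω => A.indicator u ω + Aᶜ.indicator u' ω) ∈ X)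
    -- X is not solid
    ∧ ¬ (∀ ub ∈ X, ∀ u : Ω → ℝ, Measurable u → (∀ᵐ ω ∂P, |u ω| ≤ |ub ω|) → u ∈ X)
    -- in particular √x ∉ X, although √x ≤ x a.s. and x ∈ X
    ∧ (fun ω => Real.sqrt (x ω)) ∉ X
    ∧ (∀ᵐ ω ∂P, Real.sqrt (x ω) ≤ x ω)
    ∧ x ∈ X := by
  have hspan : {h : Ω → ℝ | ∃ A : Set Ω, MeasurableSet A ∧ h = A.indicator x} = SpanSet x := rfl
  subst hX
  -- x ∈ X
  have hxX : x ∈ {f : Ω → ℝ | ∃ g : Ω → ℝ, Measurable g ∧ (∃ C : ℝ, ∀ᵐ ω ∂P, |g ω| ≤ C) ∧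
      ∃ s ∈ Submodule.span ℝ {h : Ω → ℝ | ∃ A : Set Ω, MeasurableSet A ∧ h = A.indicator x},
        f =ᵐ[P] g + s} := by
    refine ⟨fun _ => 0, measurable_const, ⟨0, Filter.Eventually.of_forall fun ω => by simp⟩,
      x, ?_, Filter.Eventually.of_forall fun ω => by simp⟩
    exact Submodule.subset_span ⟨Set.univ, MeasurableSet.univ, (Set.indicator_univ x).symm⟩
  -- sqrt x ∉ X
  have hsqrt : (fun ω => Real.sqrt (x ω)) ∉ {f : Ω → ℝ | ∃ g : Ω → ℝ, Measurable g ∧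
      (∃ C : ℝ, ∀ᵐ ω ∂P, |g ω| ≤ C) ∧
      ∃ s ∈ Submodule.span ℝ {h : Ω → ℝ | ∃ A : Set Ω, MeasurableSet A ∧ h = A.indicator x},
        f =ᵐ[P] g + s} := by
    rintro ⟨g, hgmeas, ⟨C, hC⟩, s, hsspan, heq⟩
    rw [hspan] at hsspan
    obtain ⟨φ, hφfin, rfl⟩ := span_rep x hsspan
    set F : Finset ℝ := hφfin.toFinset with hF
    set B : Finset ℝ := insert ((|C| + 1) ^ 2) (F.image (bnd |C|)) with hB
    set M : ℝ := B.max' ⟨_, Finset.mem_insert_self _ _⟩ with hM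
    refine hunb ⟨M, ?_⟩
    filter_upwards [heq, hx1, hC] with ω hω hω1 hωC
    have hωC' : |g ω| ≤ |C| := hωC.trans (le_abs_self C)
    have hkey : x ω ≤ bnd |C| (φ ω) := by
      refine keyLem |C| (abs_nonneg C) (φ ω) (x ω) (g ω) hω1 hωC' ?_
      have : Real.sqrt (x ω) = g ω + φ ω * x ω := hω
      linarith [this, mul_comm (φ ω) (x ω)]
    have hmem : bnd |C| (φ ω) ∈ B :=
      Finset.mem_insert_of_mem (Finset.mem_image_of_mem _ (hφfin.mem_toFinset.mpr ⟨ω, rfl⟩))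
    exact hkey.trans (Finset.le_max' B _ hmem)
  -- sqrt x ≤ x a.e.
  have hle : ∀ᵐ ω ∂P, Real.sqrt (x ω) ≤ x ω := by
    filter_upwards [hx1] with ω hω
    exact sqrtLeSelf (x ω) hω
  refine ⟨?_, ?_, hsqrt, hle, hxX⟩
  · -- decomposable
    rintro u ⟨g, hgmeas, ⟨C, hC⟩, s, hsspan, hueq⟩ u' hu'meas ⟨C', hC'⟩ A hA
    rw [hspan] at hsspan
    refine ⟨fun ω => A.indicator g ω + Aᶜ.indicator u' ω,
      (hgmeas.indicator hA).add (hu'meas.indicator hA.compl),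
      ⟨max C C', ?_⟩, A.indicator s, ?_, ?_⟩
    · filter_upwards [hC, hC'] with ω h1 h2
      by_cases hω : ω ∈ A
      · simp only [Set.indicator_of_mem hω, Set.indicator_of_notMem (by simp [hω] : ω ∉ Aᶜ),
          add_zero]
        exact h1.trans (le_max_left _ _)
      · simp only [Set.indicator_of_notMem hω,
          Set.indicator_of_mem (by simp [hω] : ω ∈ Aᶜ), zero_add]
        exact h2.trans (le_max_right _ _)
    · rw [hspan]; exact indicator_mem_span x hsspan A hA
    · filter_upwards [hueq] with ω hω
      have hω' : u ω = g ω + s ω := hω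
      by_cases hωA : ω ∈ A
      · simp [Set.indicator_of_mem hωA, Set.indicator_of_notMem (by simp [hωA] : ω ∉ Aᶜ), hω']
      · simp [Set.indicator_of_notMem hωA, Set.indicator_of_mem (by simp [hωA] : ω ∈ Aᶜ)]
  · -- not solid
    intro hsolid
    refine hsqrt (hsolid x hxX _ (hxmeas.sqrt) ?_)
    filter_upwards [hx1] with ω hω
    rw [abs_of_nonneg (Real.sqrt_nonneg _), abs_of_nonneg (by linarith : (0:ℝ) ≤ x ω)]
    exact sqrtLeSelf (x ω) hω
end

section
/- Let U and Y be solid decomposable spaces of ℝ^m-valued random variables in separating duality with the pairing ⟨u,y⟩ = E[u·y], and let G ⊆ F be a sub-σ-algebra with E[·|G]U ⊆ U. If Y is the Köthe dual of U, then E[y|G] ∈ Y for every y ∈ Y. -/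
open MeasureTheory ENNReal

/-- Analytic core: if `w` is "aligned" with `E[yi|G]` (i.e. `w * E[yi|G] = |w| * |E[yi|G]|`),
`w`, `yi`, and `E[w|G] * yi` are integrable, then `w * E[yi|G]` is integrable. -/
theorem stmt3_aux {Ω : Type*} [m0 : MeasurableSpace Ω] (P : Measure Ω) [IsProbabilityMeasure P]
    {G : MeasurableSpace Ω} (hG : G ≤ m0) {w yi : Ω → ℝ}
    (hwmeas : Measurable[m0] w)
    (hw : Integrable w P) (hyi : Integrable yi P)
    (hprod : Integrable (fun ω => (P[w|G]) ω * yi ω) P)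
    (hsign : ∀ ω, w ω * (P[yi|G]) ω = |w ω| * |(P[yi|G]) ω|) :
    Integrable (fun ω => w ω * (P[yi|G]) ω) P := by
  set E : Ω → ℝ := P[yi|G] with hE
  set g : Ω → ℝ := P[w|G] with hg
  have hEG : StronglyMeasurable[G] E := stronglyMeasurable_condExp
  have hgG : StronglyMeasurable[G] g := stronglyMeasurable_condExp
  have hEmeas : Measurable[m0] E := (hEG.mono hG).measurable
  -- truncation sets
  set A : ℕ → Set Ω := fun n => {ω | |E ω| ≤ (n : ℝ)} with hA
  have hAn : ∀ n, MeasurableSet[G] (A n) := fun n =>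
    measurableSet_le hEG.measurable.abs measurable_const
  set b : ℕ → Ω → ℝ := fun n => (A n).indicator E with hb
  have hbG : ∀ n, StronglyMeasurable[G] (b n) := fun n => hEG.indicator (hAn n)
  have hb_le : ∀ n ω, |b n ω| ≤ (n : ℝ) := by
    intro n ω
    by_cases h : ω ∈ A n
    · rw [hb]; simpa [Set.indicator_of_mem h] using (show |E ω| ≤ (n : ℝ) from h)
    · simp [hb, Set.indicator_of_notMem h]
  have hint1 : ∀ n, Integrable (b n * w) P := by
    intro n
    refine Integrable.mono' (hw.abs.const_mul n)
      ((((hbG n).mono hG).aestronglyMeasurable).mul hw.1) (ae_of_all _ fun ω => ?_)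
    simp only [Pi.mul_apply, Real.norm_eq_abs, abs_mul]
    exact mul_le_mul_of_nonneg_right (hb_le n ω) (abs_nonneg _)
  have heq1 : ∀ n, P[b n * w|G] =ᵐ[P] b n * g :=
    fun n => condExp_mul_of_stronglyMeasurable_left (hbG n) (hint1 n) hw
  set φ : ℕ → Ω → ℝ := fun n => (A n).indicator g with hφ
  have hφG : ∀ n, StronglyMeasurable[G] (φ n) := fun n => hgG.indicator (hAn n)
  have hint2 : ∀ n, Integrable (φ n * yi) P := by
    intro n
    refine Integrable.mono' hprod.abs
      ((((hφG n).mono hG).aestronglyMeasurable).mul hyi.1) (ae_of_all _ fun ω => ?_)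
    simp only [Pi.mul_apply, Real.norm_eq_abs, abs_mul]
    by_cases h : ω ∈ A n
    · rw [hφ]; simp [Set.indicator_of_mem h, abs_mul]
    · simp [hφ, Set.indicator_of_notMem h, mul_nonneg, abs_nonneg]
  have heq2 : ∀ n, P[φ n * yi|G] =ᵐ[P] φ n * E :=
    fun n => condExp_mul_of_stronglyMeasurable_left (hφG n) (hint2 n) hyi
  have hkey : ∀ n, φ n * E = b n * g := by
    intro n; funext ω
    by_cases h : ω ∈ A n
    · simp [hφ, hb, Set.indicator_of_mem h, mul_comm]
    · simp [hφ, hb, Set.indicator_of_notMem h]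
  set C : ℝ := ∫ ω, |g ω * yi ω| ∂P with hC
  have Hn : ∀ n, ∫ ω, (b n * w) ω ∂P ≤ C := by
    intro n
    calc ∫ ω, (b n * w) ω ∂P = ∫ ω, (P[b n * w|G]) ω ∂P := (integral_condExp hG).symm
      _ = ∫ ω, (b n * g) ω ∂P := integral_congr_ae (heq1 n)
      _ = ∫ ω, (φ n * E) ω ∂P := by rw [hkey n]
      _ = ∫ ω, (P[φ n * yi|G]) ω ∂P := (integral_congr_ae (heq2 n)).symm
      _ = ∫ ω, (φ n * yi) ω ∂P := integral_condExp hG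
      _ ≤ ∫ ω, |g ω * yi ω| ∂P := by
          refine integral_mono (hint2 n) hprod.abs fun ω => ?_
          by_cases h : ω ∈ A n
          · simp only [Pi.mul_apply, hφ, Set.indicator_of_mem h]
            exact le_abs_self _
          · simp only [Pi.mul_apply, hφ, Set.indicator_of_notMem h, zero_mul]
            exact abs_nonneg _
  have hbw_eq : ∀ n ω, (b n * w) ω = (A n).indicator (fun ω => |w ω| * |E ω|) ω := by
    intro n ω
    by_cases h : ω ∈ A n
    · simp only [Pi.mul_apply, hb, Set.indicator_of_mem h]
      rw [mul_comm]; exact hsign ω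
    · simp [hb, Set.indicator_of_notMem h]
  have hbw_nonneg : ∀ n, 0 ≤ᵐ[P] (b n * w) := by
    intro n
    refine ae_of_all _ fun ω => ?_
    rw [hbw_eq n ω]
    exact Set.indicator_nonneg (fun ω _ => mul_nonneg (abs_nonneg _) (abs_nonneg _)) ω
  -- pass to lintegral
  set ρ : Ω → ℝ≥0∞ := fun ω => ENNReal.ofReal (|w ω| * |E ω|) with hρ
  set F : ℕ → Ω → ℝ≥0∞ := fun n ω => ENNReal.ofReal ((b n * w) ω) with hF
  have hFind : ∀ n ω, F n ω = (A n).indicator ρ ω := by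
    intro n ω
    show ENNReal.ofReal ((b n * w) ω) = _
    rw [hbw_eq n ω]
    by_cases h : ω ∈ A n
    · rw [Set.indicator_of_mem h, Set.indicator_of_mem h]
    · rw [Set.indicator_of_notMem h, Set.indicator_of_notMem h, ENNReal.ofReal_zero]
  have hFmeas : ∀ n, Measurable[m0] (F n) := by
    intro n
    exact ENNReal.measurable_ofReal.comp
      ((((hbG n).mono hG).measurable).mul hwmeas)
  have hFmono : Monotone F := by
    intro n k hnk ω
    rw [hFind n ω, hFind k ω]
    refine Set.indicator_le_indicator_of_subset ?_ (fun ω => zero_le) ω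
    intro ω hω
    exact le_trans (show |E ω| ≤ (n : ℝ) from hω) (Nat.cast_le.mpr hnk)
  have hFsup : ∀ ω, (⨆ n, F n ω) = ρ ω := by
    intro ω
    obtain ⟨n, hn⟩ := exists_nat_ge (|E ω|)
    refine le_antisymm (iSup_le fun k => ?_) (le_iSup_of_le n ?_)
    · rw [hFind k ω]
      exact Set.indicator_le_self' (fun ω _ => zero_le) ω
    · rw [hFind n ω, Set.indicator_of_mem (show ω ∈ A n from hn)]
  have hFint : ∀ n, ∫⁻ ω, F n ω ∂P ≤ ENNReal.ofReal C := by
    intro n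
    rw [hF]
    rw [← ofReal_integral_eq_lintegral_ofReal (hint1 n) (hbw_nonneg n)]
    exact ENNReal.ofReal_le_ofReal (Hn n)
  have hρint : ∫⁻ ω, ρ ω ∂P ≤ ENNReal.ofReal C := by
    have : ∫⁻ ω, ρ ω ∂P = ⨆ n, ∫⁻ ω, F n ω ∂P := by
      rw [← lintegral_iSup hFmeas hFmono]
      exact lintegral_congr fun ω => (hFsup ω).symm
    rw [this]
    exact iSup_le hFint
  -- conclude
  refine ⟨hw.1.mul (hEG.mono hG).aestronglyMeasurable, ?_⟩
  rw [hasFiniteIntegral_iff_ofReal (ae_of_all _ fun ω => by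
    rw [hsign ω]; exact mul_nonneg (abs_nonneg _) (abs_nonneg _))]
  calc ∫⁻ ω, ENNReal.ofReal (w ω * E ω) ∂P = ∫⁻ ω, ρ ω ∂P := by
        refine lintegral_congr fun ω => ?_
        rw [hρ, hsign ω]
    _ ≤ ENNReal.ofReal C := hρint
    _ < ⊤ := ENNReal.ofReal_lt_top

theorem stmt3_eval {Ω : Type*} {m0 : MeasurableSpace Ω} {k : ℕ} {v : Ω → Fin k → ℝ}
    (hv : Measurable v) (j : Fin k) : Measurable fun ω => v ω j := hv.eval

theorem stmt3_aesm {Ω : Type*} {m0 : MeasurableSpace Ω} {f : Ω → ℝ} (P : Measure Ω)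
    (hf : Measurable f) : MeasureTheory.AEStronglyMeasurable f P := hf.aestronglyMeasurable

theorem stmt3_mulmeas {Ω : Type*} {m0 : MeasurableSpace Ω} {f g : Ω → ℝ}
    (hf : Measurable f) (hg : Measurable g) : Measurable fun ω => f ω * g ω := hf.mul hg

theorem stmt3_absmeas {Ω : Type*} {m0 : MeasurableSpace Ω} {f : Ω → ℝ}
    (hf : Measurable f) : Measurable fun ω => |f ω| := hf.abs

theorem stmt3_pi {Ω : Type*} {m0 : MeasurableSpace Ω} {k : ℕ} {v : Ω → Fin k → ℝ}
    (hv : ∀ j, Measurable fun ω => v ω j) : Measurable v := measurable_pi_lambda _ hv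

/-- If `U` and `Y` are solid decomposable spaces of `ℝ^m`-valued random variables in separating
duality, `G` a sub-σ-algebra with `E[·|G]U ⊆ U`, and `Y` is the Köthe dual of `U`, then
`E[y|G] ∈ Y` for every `y ∈ Y`. -/
theorem stmt3 {Ω : Type*} [m0 : MeasurableSpace Ω] (P : Measure Ω) [IsProbabilityMeasure P]
    {m : ℕ} (U Y : Set (Ω → Fin m → ℝ))
    (hUmeas : ∀ u ∈ U, Measurable u) (hYmeas : ∀ y ∈ Y, Measurable y)
    -- solidity
    (hUsolid : ∀ ub ∈ U, ∀ u : Ω → Fin m → ℝ, Measurable u →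
      (∀ i, ∀ᵐ ω ∂P, |u ω i| ≤ |ub ω i|) → u ∈ U)
    (hYsolid : ∀ yb ∈ Y, ∀ y : Ω → Fin m → ℝ, Measurable y →
      (∀ i, ∀ᵐ ω ∂P, |y ω i| ≤ |yb ω i|) → y ∈ Y)
    -- decomposability
    (hUdec : ∀ u ∈ U, ∀ u' : Ω → Fin m → ℝ, Measurable u' →
      (∃ C : ℝ, ∀ᵐ ω ∂P, ∀ i, |u' ω i| ≤ C) → ∀ A : Set Ω, MeasurableSet A →
        (fun ω => A.indicator u ω + Aᶜ.indicator u' ω) ∈ U)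
    (hYdec : ∀ y ∈ Y, ∀ y' : Ω → Fin m → ℝ, Measurable y' →
      (∃ C : ℝ, ∀ᵐ ω ∂P, ∀ i, |y' ω i| ≤ C) → ∀ A : Set Ω, MeasurableSet A →
        (fun ω => A.indicator y ω + Aᶜ.indicator y' ω) ∈ Y)
    -- pairing and separation
    (hpair : ∀ u ∈ U, ∀ y ∈ Y, Integrable (fun ω => ∑ i, u ω i * y ω i) P)
    (hsepU : ∀ u ∈ U, ¬ u =ᵐ[P] 0 → ∃ y ∈ Y, ∫ ω, ∑ i, u ω i * y ω i ∂P ≠ 0)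
    (hsepY : ∀ y ∈ Y, ¬ y =ᵐ[P] 0 → ∃ u ∈ U, ∫ ω, ∑ i, u ω i * y ω i ∂P ≠ 0)
    -- Y is the Köthe dual of U
    (hKothe : Y = {y : Ω → Fin m → ℝ | Measurable y ∧
      ∀ u ∈ U, Integrable (fun ω => ∑ i, u ω i * y ω i) P})
    (G : MeasurableSpace Ω) (hG : G ≤ m0)
    -- conditional expectation maps U into U
    (hEU : ∀ u ∈ U, (fun ω i => (P[fun ω' => u ω' i | G]) ω) ∈ U) :
    ∀ y ∈ Y, (fun ω i => (P[fun ω' => y ω' i | G]) ω) ∈ Y := by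
  -- `0 ∈ Y`, hence all bounded measurable functions are in `Y`
  have h0Y : (0 : Ω → Fin m → ℝ) ∈ Y := by
    rw [hKothe]
    refine ⟨measurable_const, fun u hu => ?_⟩
    simpa using (integrable_const (0 : ℝ) : Integrable (fun _ : Ω => (0 : ℝ)) P)
  have hYbdd : ∀ v : Ω → Fin m → ℝ, Measurable[m0] v →
      (∃ C : ℝ, ∀ ω i, |v ω i| ≤ C) → v ∈ Y := by
    rintro v hv ⟨C, hC⟩
    have := hYdec 0 h0Y v hv ⟨C, ae_of_all _ fun ω i => hC ω i⟩ ∅ (@MeasurableSet.empty Ω m0)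
    simpa using this
  have hUbdd : ∀ u ∈ U, ∀ v : Ω → Fin m → ℝ, Measurable[m0] v →
      (∃ C : ℝ, ∀ ω i, |v ω i| ≤ C) → v ∈ U := by
    rintro u hu v hv ⟨C, hC⟩
    have := hUdec u hu v hv ⟨C, ae_of_all _ fun ω i => hC ω i⟩ ∅ (@MeasurableSet.empty Ω m0)
    simpa using this
  -- unit "vectors"
  have hebnd : ∀ i : Fin m, ∃ C : ℝ, ∀ (ω : Ω) (j : Fin m),
      |(fun _ j => if j = i then (1:ℝ) else 0 : Ω → Fin m → ℝ) ω j| ≤ C := by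
    intro i
    exact ⟨1, fun ω j => by dsimp only; split <;> norm_num⟩
  have heY : ∀ i : Fin m, (fun _ j => if j = i then (1:ℝ) else 0 : Ω → Fin m → ℝ) ∈ Y :=
    fun i => hYbdd _ measurable_const (hebnd i)
  intro y hy
  have hy' := hy
  rw [hKothe] at hy'
  obtain ⟨hym, hyint⟩ := hy'
  rw [hKothe]
  refine ⟨stmt3_pi fun i => (stronglyMeasurable_condExp.mono hG).measurable,
    fun u hu => ?_⟩
  have heU : ∀ i : Fin m, (fun _ j => if j = i then (1:ℝ) else 0 : Ω → Fin m → ℝ) ∈ U :=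
    fun i => hUbdd u hu _ measurable_const (hebnd i)
  -- componentwise integrability of `y` and `u`
  have hyiInt : ∀ i, Integrable (fun ω => y ω i) P := by
    intro i
    have := hpair _ (heU i) y hy
    simpa [ite_mul, Finset.sum_ite_eq, Finset.sum_ite_eq'] using this
  have huiInt : ∀ i, Integrable (fun ω => u ω i) P := by
    intro i
    have := hpair u hu _ (heY i)
    simpa [mul_ite, Finset.sum_ite_eq, Finset.sum_ite_eq'] using this
  -- the key componentwise fact
  have key : ∀ i : Fin m, Integrable (fun ω => u ω i * (P[fun ω' => y ω' i | G]) ω) P := by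
    intro i
    set ei : Ω → ℝ := P[fun ω' => y ω' i | G] with hei
    have heiMeas : Measurable[m0] ei := (stronglyMeasurable_condExp.mono hG).measurable
    set s : Ω → ℝ := fun ω => if ei ω < 0 then -1 else 1 with hs
    have hsMeas : Measurable[m0] s := by
      have hset : MeasurableSet[m0] {ω | ei ω < 0} := measurableSet_lt heiMeas measurable_const
      exact Measurable.ite hset measurable_const measurable_const
    have hse : ∀ ω, s ω * ei ω = |ei ω| := by
      intro ω
      by_cases h : ei ω < 0
      · have hsω : s ω = -1 := by rw [hs]; simp [h]
        rw [hsω, abs_of_neg h]; ring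
      · have hsω : s ω = 1 := by rw [hs]; simp [h]
        rw [hsω, abs_of_nonneg (not_lt.mp h)]; ring
    have hsabs : ∀ ω, |s ω| = 1 := by
      intro ω
      by_cases h : ei ω < 0
      · have hsω : s ω = -1 := by rw [hs]; simp [h]
        rw [hsω]; norm_num
      · have hsω : s ω = 1 := by rw [hs]; simp [h]
        rw [hsω]; norm_num
    set w : Ω → ℝ := fun ω => |u ω i| * s ω with hwdef
    have hwMeas : Measurable[m0] w := stmt3_mulmeas (stmt3_absmeas (stmt3_eval (hUmeas u hu) i)) hsMeas
    have habsw : ∀ ω, |w ω| = |u ω i| := by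
      intro ω; rw [hwdef]; dsimp only
      rw [abs_mul, hsabs, mul_one, abs_abs]
    have hsign : ∀ ω, w ω * ei ω = |w ω| * |ei ω| := by
      intro ω
      rw [habsw, hwdef]; dsimp only
      rw [mul_assoc, hse]
    have hwInt : Integrable w P := by
      refine Integrable.mono' (huiInt i).abs (stmt3_aesm P hwMeas)
        (ae_of_all _ fun ω => ?_)
      rw [Real.norm_eq_abs, habsw]
    -- the aligned vector in `U` and its conditional expectation
    set ut : Ω → Fin m → ℝ := fun ω j => if j = i then w ω else 0 with hut
    have hutMeas : Measurable[m0] ut := by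
      refine stmt3_pi fun j => ?_
      by_cases h : j = i
      · subst h; simpa [hut] using hwMeas
      · simp only [hut, if_neg h]; exact measurable_const
    have hutU : ut ∈ U := by
      refine hUsolid u hu ut hutMeas fun j => ae_of_all _ fun ω => ?_
      by_cases h : j = i
      · subst h; simp only [hut, if_pos rfl]
        rw [habsw]
      · simp only [hut, if_neg h, abs_zero]
        exact abs_nonneg _
    have hgU := hEU ut hutU
    have hwre : (fun ω' => ut ω' i) = w := funext fun ω => by simp [hut]
    -- the padded `y`-component is in `Y`
    set yp : Ω → Fin m → ℝ := fun ω j => if j = i then y ω j else 0 with hyp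
    have hypMeas : Measurable[m0] yp := by
      refine stmt3_pi fun j => ?_
      by_cases h : j = i
      · subst h; simpa [hyp] using stmt3_eval hym _
      · simp only [hyp, if_neg h]; exact measurable_const
    have hypY : yp ∈ Y := by
      refine hYsolid y hy yp hypMeas fun j => ae_of_all _ fun ω => ?_
      by_cases h : j = i
      · subst h; simp [hyp]
      · simp only [hyp, if_neg h, abs_zero]
        exact abs_nonneg _
    have hprod : Integrable (fun ω => (P[w|G]) ω * y ω i) P := by
      have := hpair _ hgU yp hypY
      simpa [hyp, mul_ite, Finset.sum_ite_eq, Finset.sum_ite_eq', hwre] using this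
    have haux := @stmt3_aux Ω m0 P ‹IsProbabilityMeasure P› G hG w (fun ω => y ω i)
      hwMeas hwInt (hyiInt i) hprod hsign
    refine haux.mono' (stmt3_aesm P (stmt3_mulmeas (stmt3_eval (hUmeas u hu) i) heiMeas))
      (ae_of_all _ fun ω => ?_)
    rw [Real.norm_eq_abs, hsign ω, habsw, abs_mul]
  exact integrable_finset_sum Finset.univ fun i _ => key i
end

section
/- Let U and Y be solid paired spaces of random variables with E[·|G]U ⊆ U and E[·|G]Y ⊆ Y for a sub-σ-algebra G. Then the conditional expectation operator E[·|G] : U → U is weakly continuous (for the σ(U,Y) topology) and self-adjoint: ⟨E[u|G], y⟩ = ⟨u, E[y|G]⟩ for all u ∈ U, y ∈ Y. -/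
open MeasureTheory Topology

lemma condexp_adjoint_aux {Ω : Type*} [m0 : MeasurableSpace Ω] (P : Measure Ω)
    [IsProbabilityMeasure P] {G : MeasurableSpace Ω} (hG : G ≤ m0) (f g : Ω → ℝ)
    (hf : Integrable f P) (hg : Integrable g P)
    (h1 : Integrable (fun ω => (P[f|G]) ω * g ω) P)
    (h2 : Integrable (fun ω => f ω * (P[g|G]) ω) P) :
    ∫ ω, (P[f|G]) ω * g ω ∂P = ∫ ω, f ω * (P[g|G]) ω ∂P := by
  have e1 : P[(P[f|G]) * g | G] =ᵐ[P] (P[f|G]) * P[g|G] :=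
    condExp_mul_of_stronglyMeasurable_left stronglyMeasurable_condExp h1 hg
  have e2 : P[(P[g|G]) * f | G] =ᵐ[P] (P[g|G]) * P[f|G] :=
    condExp_mul_of_stronglyMeasurable_left stronglyMeasurable_condExp (by rw [mul_comm]; exact h2) hf
  calc ∫ ω, (P[f|G]) ω * g ω ∂P = ∫ ω, ((P[f|G]) * g) ω ∂P := rfl
    _ = ∫ ω, (P[(P[f|G]) * g | G]) ω ∂P := (integral_condExp hG).symm
    _ = ∫ ω, ((P[f|G]) * P[g|G]) ω ∂P := integral_congr_ae e1
    _ = ∫ ω, ((P[g|G]) * P[f|G]) ω ∂P := by simp [mul_comm]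
    _ = ∫ ω, (P[(P[g|G]) * f | G]) ω ∂P := (integral_congr_ae e2).symm
    _ = ∫ ω, ((P[g|G]) * f) ω ∂P := integral_condExp hG
    _ = ∫ ω, f ω * (P[g|G]) ω ∂P := by simp [mul_comm]

/-- If `U` and `Y` are solid paired spaces with `E[·|G]U ⊆ U` and `E[·|G]Y ⊆ Y`, then the
conditional expectation `E[·|G] : U → U` is weakly (σ(U,Y)-) continuous and self-adjoint:
`⟨E[u|G], y⟩ = ⟨u, E[y|G]⟩` for all `u ∈ U`, `y ∈ Y`. -/
theorem stmt4 {Ω : Type*} [m0 : MeasurableSpace Ω] (P : Measure Ω) [IsProbabilityMeasure P]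
    {m : ℕ} (U Y : Set (Ω → Fin m → ℝ))
    (hUmeas : ∀ u ∈ U, Measurable u) (hYmeas : ∀ y ∈ Y, Measurable y)
    (hUsolid : ∀ ub ∈ U, ∀ u : Ω → Fin m → ℝ, Measurable u →
      (∀ i, ∀ᵐ ω ∂P, |u ω i| ≤ |ub ω i|) → u ∈ U)
    (hYsolid : ∀ yb ∈ Y, ∀ y : Ω → Fin m → ℝ, Measurable y →
      (∀ i, ∀ᵐ ω ∂P, |y ω i| ≤ |yb ω i|) → y ∈ Y)
    (hUdec : ∀ u ∈ U, ∀ u' : Ω → Fin m → ℝ, Measurable u' →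
      (∃ C : ℝ, ∀ᵐ ω ∂P, ∀ i, |u' ω i| ≤ C) → ∀ A : Set Ω, MeasurableSet A →
        (fun ω => A.indicator u ω + Aᶜ.indicator u' ω) ∈ U)
    (hYdec : ∀ y ∈ Y, ∀ y' : Ω → Fin m → ℝ, Measurable y' →
      (∃ C : ℝ, ∀ᵐ ω ∂P, ∀ i, |y' ω i| ≤ C) → ∀ A : Set Ω, MeasurableSet A →
        (fun ω => A.indicator y ω + Aᶜ.indicator y' ω) ∈ Y)
    (hpair : ∀ u ∈ U, ∀ y ∈ Y, Integrable (fun ω => ∑ i, u ω i * y ω i) P)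
    (hsepU : ∀ u ∈ U, ¬ u =ᵐ[P] 0 → ∃ y ∈ Y, ∫ ω, ∑ i, u ω i * y ω i ∂P ≠ 0)
    (hsepY : ∀ y ∈ Y, ¬ y =ᵐ[P] 0 → ∃ u ∈ U, ∫ ω, ∑ i, u ω i * y ω i ∂P ≠ 0)
    (G : MeasurableSpace Ω) (hG : G ≤ m0)
    (hEU : ∀ u ∈ U, (fun ω i => (P[fun ω' => u ω' i | G]) ω) ∈ U)
    (hEY : ∀ y ∈ Y, (fun ω i => (P[fun ω' => y ω' i | G]) ω) ∈ Y) :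
    -- self-adjointness
    (∀ u ∈ U, ∀ y ∈ Y,
      ∫ ω, ∑ i, (P[fun ω' => u ω' i | G]) ω * y ω i ∂P
        = ∫ ω, ∑ i, u ω i * (P[fun ω' => y ω' i | G]) ω ∂P) ∧
    -- weak continuity for σ(U,Y) on domain and codomain
    (Continuous[
        TopologicalSpace.induced
          (fun (u : U) => fun (y : Y) => ∫ ω, ∑ i, (u : Ω → Fin m → ℝ) ω i * (y : Ω → Fin m → ℝ) ω i ∂P)
          Pi.topologicalSpace,
        TopologicalSpace.induced
          (fun (u : U) => fun (y : Y) => ∫ ω, ∑ i, (u : Ω → Fin m → ℝ) ω i * (y : Ω → Fin m → ℝ) ω i ∂P)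
          Pi.topologicalSpace]
      (fun u : U => (⟨fun ω i => (P[fun ω' => (u : Ω → Fin m → ℝ) ω' i | G]) ω, hEU u u.2⟩ : U))) := by
  classical
  letI : MeasurableSpace Ω := m0
  -- coordinate restriction stays in U
  have hUcoord : ∀ u ∈ U, ∀ i : Fin m, (fun ω j => if j = i then u ω j else 0) ∈ U := by
    intro u hu i
    refine hUsolid u hu _ ?_ (fun i' => ae_of_all _ fun ω => ?_)
    · exact measurable_pi_lambda _ fun j => by
        by_cases h : j = i
        · simpa [h, Function.comp_def] using (measurable_pi_apply i).comp (hUmeas u hu)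
        · simp [h]
    · by_cases h : i' = i <;> simp [h]
  -- product of coordinates integrable
  have hprod : ∀ u ∈ U, ∀ y ∈ Y, ∀ i : Fin m, Integrable (fun ω => u ω i * y ω i) P := by
    intro u hu y hy i
    have := hpair _ (hUcoord u hu i) y hy
    simpa [ite_mul, Finset.sum_ite_eq', Finset.mem_univ] using this
  -- coordinate of u is integrable (given Y nonempty)
  have hUint : ∀ u ∈ U, ∀ y ∈ Y, ∀ i : Fin m, Integrable (fun ω => u ω i) P := by
    intro u hu y hy i
    set s : Ω → Fin m → ℝ :=
      fun ω j => if j = i then (if 0 ≤ u ω i then (1:ℝ) else -1) else 0 with hs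
    have smeas : Measurable s := by
      refine measurable_pi_lambda _ fun j => ?_
      by_cases h : j = i
      · simp only [hs, h, if_true]
        exact Measurable.ite (measurableSet_le measurable_const
          ((measurable_pi_apply i).comp (hUmeas u hu))) measurable_const measurable_const
      · simp [hs, h]
    have sY : s ∈ Y := by
      have := hYdec y hy s smeas ⟨1, ae_of_all _ fun ω j => by
        by_cases h : j = i <;> simp [hs, h] <;> split <;> norm_num⟩ ∅ MeasurableSet.empty
      simpa [Set.indicator] using this
    have J : Integrable (fun ω => u ω i * (if 0 ≤ u ω i then (1:ℝ) else -1)) P := by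
      have := hpair u hu s sY
      simpa [hs, mul_ite, mul_zero, Finset.sum_ite_eq', Finset.mem_univ] using this
    refine J.mono' ((measurable_pi_apply i).comp (hUmeas u hu)).aestronglyMeasurable
      (ae_of_all _ fun ω => ?_)
    rw [Real.norm_eq_abs]
    by_cases h : 0 ≤ u ω i
    · simp [h, abs_of_nonneg h]
    · simp [h, abs_of_neg (lt_of_not_ge h)]
  -- coordinate of y is integrable (given U nonempty)
  have hYint : ∀ u ∈ U, ∀ y ∈ Y, ∀ i : Fin m, Integrable (fun ω => y ω i) P := by
    intro u hu y hy i
    set s : Ω → Fin m → ℝ :=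
      fun ω j => if j = i then (if 0 ≤ y ω i then (1:ℝ) else -1) else 0 with hs
    have smeas : Measurable s := by
      refine measurable_pi_lambda _ fun j => ?_
      by_cases h : j = i
      · simp only [hs, h, if_true]
        exact Measurable.ite (measurableSet_le measurable_const
          ((measurable_pi_apply i).comp (hYmeas y hy))) measurable_const measurable_const
      · simp [hs, h]
    have sU : s ∈ U := by
      have := hUdec u hu s smeas ⟨1, ae_of_all _ fun ω j => by
        by_cases h : j = i <;> simp [hs, h] <;> split <;> norm_num⟩ ∅ MeasurableSet.empty
      simpa [Set.indicator] using this
    have J : Integrable (fun ω => (if 0 ≤ y ω i then (1:ℝ) else -1) * y ω i) P := by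
      have := hpair s sU y hy
      simpa [hs, ite_mul, zero_mul, Finset.sum_ite_eq', Finset.mem_univ] using this
    refine J.mono' ((measurable_pi_apply i).comp (hYmeas y hy)).aestronglyMeasurable
      (ae_of_all _ fun ω => ?_)
    rw [Real.norm_eq_abs]
    by_cases h : 0 ≤ y ω i
    · simp [h, abs_of_nonneg h]
    · simp [h, abs_of_neg (lt_of_not_ge h)]
  -- the self-adjointness property
  have key : ∀ u ∈ U, ∀ y ∈ Y,
      ∫ ω, ∑ i, (P[fun ω' => u ω' i | G]) ω * y ω i ∂P
        = ∫ ω, ∑ i, u ω i * (P[fun ω' => y ω' i | G]) ω ∂P := by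
    intro u hu y hy
    have I1 : ∀ i : Fin m, Integrable (fun ω => (P[fun ω' => u ω' i | G]) ω * y ω i) P :=
      fun i => hprod _ (hEU u hu) y hy i
    have I2 : ∀ i : Fin m, Integrable (fun ω => u ω i * (P[fun ω' => y ω' i | G]) ω) P :=
      fun i => hprod u hu _ (hEY y hy) i
    rw [integral_finset_sum _ (fun i _ => I1 i), integral_finset_sum _ (fun i _ => I2 i)]
    exact Finset.sum_congr rfl fun i _ =>
      condexp_adjoint_aux P hG (fun ω => u ω i) (fun ω => y ω i)
        (hUint u hu y hy i) (hYint u hu y hy i) (I1 i) (I2 i)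
  refine ⟨key, ?_⟩
  letI : TopologicalSpace ↑U := TopologicalSpace.induced
    (fun (u : U) => fun (y : Y) => ∫ ω, ∑ i, (u : Ω → Fin m → ℝ) ω i * (y : Ω → Fin m → ℝ) ω i ∂P)
    Pi.topologicalSpace
  rw [continuous_induced_rng]
  refine continuous_pi fun y => ?_
  have heq : (fun u : U => ∫ ω, ∑ i,
        (P[fun ω' => (u : Ω → Fin m → ℝ) ω' i | G]) ω * (y : Ω → Fin m → ℝ) ω i ∂P)
      = fun u : U => ∫ ω, ∑ i, (u : Ω → Fin m → ℝ) ω i *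
        ((⟨fun ω i => (P[fun ω' => (y : Ω → Fin m → ℝ) ω' i | G]) ω, hEY y y.2⟩ : Y) :
          Ω → Fin m → ℝ) ω i ∂P := by
    funext u
    exact key u u.2 y y.2
  simp only [Function.comp_def]
  rw [heq]
  have hι : Continuous (fun (u : U) => fun (y : Y) =>
      ∫ ω, ∑ i, (u : Ω → Fin m → ℝ) ω i * (y : Ω → Fin m → ℝ) ω i ∂P) :=
    continuous_induced_dom
  exact (continuous_apply (A := fun _ : ↑Y => ℝ) _).comp hι
end

section
/- Let A be a random m×n matrix such that Ax ∈ U for all x ∈ X, where X is paired with its Köthe dual V and U is paired with Y. Then for every y ∈ Y, the pointwise defined random vector A^T y belongs to V, and the linear map x ↦ Ax from X to U is weakly continuous with adjoint y ↦ A^T y, i.e. E[(Ax)·y] = E[x·(A^T y)] for all x ∈ X, y ∈ Y. -/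
open MeasureTheory Matrix

lemma key_eq {m n : ℕ} (A : Matrix (Fin m) (Fin n) ℝ) (x : Fin n → ℝ) (y : Fin m → ℝ) :
    ∑ j, (A *ᵥ x) j * y j = ∑ i, x i * (Aᵀ *ᵥ y) i := by
  simp only [mulVec, dotProduct, transpose_apply, Finset.sum_mul, Finset.mul_sum]
  rw [Finset.sum_comm]
  congr 1; ext i; congr 1; ext j; ring

/-- If `A` is a random `m×n` matrix with `Ax ∈ U` for all `x ∈ X`, where `X` is paired with its
Köthe dual `V` and `U` with `Y`, then `Aᵀy ∈ V` for every `y ∈ Y`, and the pointwise map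
`x ↦ Ax` is weakly continuous with adjoint `y ↦ Aᵀy`: `E[(Ax)·y] = E[x·(Aᵀy)]`. -/
theorem stmt5 {Ω : Type*} [m0 : MeasurableSpace Ω] (P : Measure Ω) [IsProbabilityMeasure P]
    {m n : ℕ} (X V : Set (Ω → Fin n → ℝ)) (U Y : Set (Ω → Fin m → ℝ))
    (hXmeas : ∀ x ∈ X, Measurable x) (hYmeas : ∀ y ∈ Y, Measurable y)
    -- V is the Köthe dual of X
    (hV : V = {v : Ω → Fin n → ℝ | Measurable v ∧
      ∀ x ∈ X, Integrable (fun ω => ∑ i, x ω i * v ω i) P})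
    -- pairing of U and Y
    (hUY : ∀ u ∈ U, ∀ y ∈ Y, Integrable (fun ω => ∑ j, u ω j * y ω j) P)
    (A : Ω → Matrix (Fin m) (Fin n) ℝ) (hA : ∀ i j, Measurable fun ω => A ω i j)
    (hAX : ∀ x ∈ X, (fun ω => A ω *ᵥ x ω) ∈ U) :
    ∀ y ∈ Y,
      ((fun ω => (A ω)ᵀ *ᵥ y ω) ∈ V ∧
       ∀ x ∈ X, ∫ ω, ∑ j, (A ω *ᵥ x ω) j * y ω j ∂P
          = ∫ ω, ∑ i, x ω i * ((A ω)ᵀ *ᵥ y ω) i ∂P) := by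
  intro y hy
  have hmeas : Measurable fun ω => (A ω)ᵀ *ᵥ y ω := by
    apply measurable_pi_lambda
    intro i
    simp only [mulVec, dotProduct, transpose_apply]
    exact Finset.measurable_sum _ fun j _ =>
      (hA j i).mul ((hYmeas y hy).eval)
  refine ⟨?_, ?_⟩
  · rw [hV]
    refine ⟨hmeas, fun x hx => ?_⟩
    have := hUY _ (hAX x hx) y hy
    simpa only [key_eq] using this
  · intro x hx
    congr 1
    ext ω
    exact key_eq (A ω) (x ω) (y ω)
end

section
/- If x ∈ N is an adapted process and v ∈ N^⊥ (i.e. v ∈ L^1 and E[x'·v] = 0 for every bounded adapted x'), and the positive part of x·v := Σ_t x_t·v_t is integrable, then E[x·v] = 0. -/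
open MeasureTheory ENNReal Filter
set_option linter.unusedSectionVars false
set_option maxHeartbeats 1000000

namespace Stmt12Aux

variable {Ω : Type*} {m0 : MeasurableSpace Ω} {μ : Measure Ω} [IsProbabilityMeasure μ]
variable {F : MeasurableSpace Ω} {φ ψ : Ω → ℝ}

noncomputable def CE {m0 : MeasurableSpace Ω} (F : MeasurableSpace Ω) (μ : @Measure Ω m0)
    (φ : Ω → ℝ) : Ω → ℝ≥0∞ :=
  fun ω => ⨆ n : ℕ, ENNReal.ofReal ((μ[fun ω' => min (φ ω') n | F]) ω)

lemma measurable_CE : Measurable[F] (CE F μ φ) :=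
  Measurable.iSup fun _ => ENNReal.measurable_ofReal.comp stronglyMeasurable_condExp.measurable

lemma integrable_min (hφm : AEStronglyMeasurable[m0] φ μ) (hφ : 0 ≤ᵐ[μ] φ) (n : ℕ) :
    Integrable (fun ω => min (φ ω) n) μ := by
  refine Integrable.mono' (integrable_const (n : ℝ))
    (hφm.inf (aestronglyMeasurable_const (b := (n : ℝ)))) ?_
  filter_upwards [hφ] with ω hω
  rw [Real.norm_eq_abs, abs_le]
  have h0 : (0:ℝ) ≤ min (φ ω) n := le_min hω (Nat.cast_nonneg _)
  exact ⟨by linarith [Nat.cast_nonneg (α := ℝ) n], min_le_right _ _⟩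

lemma iSup_ofReal_min (a : ℝ) : (⨆ n : ℕ, ENNReal.ofReal (min a n)) = ENNReal.ofReal a := by
  refine le_antisymm (iSup_le fun n => ENNReal.ofReal_le_ofReal (min_le_left _ _)) ?_
  refine le_iSup_of_le ⌈a⌉₊ (le_of_eq ?_)
  rw [min_eq_left (Nat.le_ceil a)]

lemma CE_ae_monotone (hφm : AEStronglyMeasurable[m0] φ μ) (hφ : 0 ≤ᵐ[μ] φ) :
    ∀ᵐ ω ∂μ, Monotone fun n : ℕ => ENNReal.ofReal ((μ[fun ω' => min (φ ω') n | F]) ω) := by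
  have h : ∀ n : ℕ, ∀ᵐ ω ∂μ,
      (μ[fun ω' => min (φ ω') n | F]) ω ≤ (μ[fun ω' => min (φ ω') (n+1 : ℕ) | F]) ω := by
    intro n
    refine condExp_mono (integrable_min hφm hφ n) (integrable_min hφm hφ (n+1)) ?_
    refine ae_of_all _ fun ω => min_le_min le_rfl ?_
    exact Nat.cast_le.mpr (Nat.le_succ n)
  filter_upwards [ae_all_iff.mpr h] with ω hω
  exact monotone_nat_of_le_succ fun n => ENNReal.ofReal_le_ofReal (hω n)

lemma setLIntegral_CE (hF : F ≤ m0) (hφm : AEStronglyMeasurable[m0] φ μ) (hφ : 0 ≤ᵐ[μ] φ)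
    {A : Set Ω} (hA : MeasurableSet[F] A) :
    ∫⁻ ω in A, CE F μ φ ω ∂μ = ∫⁻ ω in A, ENNReal.ofReal (φ ω) ∂μ := by
  haveI : SigmaFinite (μ.trim hF) := by
    haveI : IsFiniteMeasure (μ.trim hF) := isFiniteMeasure_trim hF
    infer_instance
  have hint : ∀ n : ℕ, Integrable (fun ω' => min (φ ω') n) μ := integrable_min hφm hφ
  have hnn : ∀ n : ℕ, 0 ≤ᵐ[μ] (μ[fun ω' => min (φ ω') n | F]) := fun n =>
    condExp_nonneg (by filter_upwards [hφ] with ω hω; exact le_min hω (Nat.cast_nonneg _))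
  have step : ∀ n : ℕ,
      ∫⁻ ω in A, ENNReal.ofReal ((μ[fun ω' => min (φ ω') n | F]) ω) ∂μ
        = ∫⁻ ω in A, ENNReal.ofReal (min (φ ω) n) ∂μ := by
    intro n
    rw [← ofReal_integral_eq_lintegral_ofReal (integrable_condExp.restrict)
        (ae_restrict_of_ae (hnn n)),
      ← ofReal_integral_eq_lintegral_ofReal ((hint n).restrict)
        (ae_restrict_of_ae (by filter_upwards [hφ] with ω hω; exact le_min hω (Nat.cast_nonneg _))),
      setIntegral_condExp hF (hint n) hA]
  calc ∫⁻ ω in A, CE F μ φ ω ∂μ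
      = ⨆ n : ℕ, ∫⁻ ω in A, ENNReal.ofReal ((μ[fun ω' => min (φ ω') n | F]) ω) ∂μ := by
        refine lintegral_iSup' (fun n => ?_) (ae_restrict_of_ae (CE_ae_monotone hφm hφ))
        exact (ENNReal.measurable_ofReal.comp
          ((stronglyMeasurable_condExp (m := F)).mono hF).measurable).aemeasurable
    _ = ⨆ n : ℕ, ∫⁻ ω in A, ENNReal.ofReal (min (φ ω) n) ∂μ := by
        exact iSup_congr step
    _ = ∫⁻ ω in A, ⨆ n : ℕ, ENNReal.ofReal (min (φ ω) n) ∂μ := by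
        refine (lintegral_iSup' (fun n => ?_) (ae_restrict_of_ae (ae_of_all _ fun ω => ?_))).symm
        · exact ENNReal.measurable_ofReal.comp_aemeasurable ((hint n).aemeasurable.restrict)
        · exact fun m k hmk => ENNReal.ofReal_le_ofReal
            (min_le_min le_rfl (Nat.cast_le.mpr hmk))
    _ = ∫⁻ ω in A, ENNReal.ofReal (φ ω) ∂μ := by
        refine lintegral_congr fun ω => iSup_ofReal_min (φ ω)


lemma CE_unique (hF : F ≤ m0) {k1 k2 : Ω → ℝ≥0∞} (h1 : Measurable[F] k1) (h2 : Measurable[F] k2)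
    (h : ∀ A : Set Ω, MeasurableSet[F] A → ∫⁻ ω in A, k1 ω ∂μ = ∫⁻ ω in A, k2 ω ∂μ) :
    k1 =ᵐ[μ] k2 := by
  haveI : SigmaFinite (μ.trim hF) := by
    haveI : IsFiniteMeasure (μ.trim hF) := isFiniteMeasure_trim hF
    infer_instance
  refine ae_eq_of_ae_eq_trim (hm := hF)
    (ae_eq_of_forall_setLIntegral_eq_of_sigmaFinite h1 h2 fun s hs _ => ?_)
  rw [restrict_trim hF _ hs, lintegral_trim _ h1, lintegral_trim _ h2]
  exact h s hs

lemma CE_mono (hφm : AEStronglyMeasurable[m0] φ μ) (hφ : 0 ≤ᵐ[μ] φ)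
    (hψm : AEStronglyMeasurable[m0] ψ μ) (hψ : 0 ≤ᵐ[μ] ψ) (hle : φ ≤ᵐ[μ] ψ) :
    CE F μ φ ≤ᵐ[μ] CE F μ ψ := by
  have h : ∀ n : ℕ, ∀ᵐ ω ∂μ,
      (μ[fun ω' => min (φ ω') n | F]) ω ≤ (μ[fun ω' => min (ψ ω') n | F]) ω := fun n =>
    condExp_mono (integrable_min hφm hφ n) (integrable_min hψm hψ n)
      (by filter_upwards [hle] with ω hω; exact min_le_min hω le_rfl)
  filter_upwards [ae_all_iff.mpr h] with ω hω
  exact iSup_mono fun n => ENNReal.ofReal_le_ofReal (hω n)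

lemma CE_add (hF : F ≤ m0) (hφm : AEStronglyMeasurable[m0] φ μ) (hφ : 0 ≤ᵐ[μ] φ)
    (hψm : AEStronglyMeasurable[m0] ψ μ) (hψ : 0 ≤ᵐ[μ] ψ) :
    CE F μ (fun ω => φ ω + ψ ω) =ᵐ[μ] fun ω => CE F μ φ ω + CE F μ ψ ω := by
  refine CE_unique hF measurable_CE (measurable_CE.add measurable_CE) fun A hA => ?_
  rw [setLIntegral_CE (φ := fun ω => φ ω + ψ ω) hF (hφm.add hψm)
      (by filter_upwards [hφ, hψ] with ω h1 h2; exact add_nonneg h1 h2) hA,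
    lintegral_add_left ((measurable_CE (φ := φ)).mono hF le_rfl),
    setLIntegral_CE hF hφm hφ hA, setLIntegral_CE hF hψm hψ hA]
  rw [show (∫⁻ ω in A, ENNReal.ofReal (φ ω + ψ ω) ∂μ)
      = ∫⁻ ω in A, (ENNReal.ofReal (φ ω) + ENNReal.ofReal (ψ ω)) ∂μ from
      lintegral_congr_ae (ae_restrict_of_ae (by
        filter_upwards [hφ, hψ] with ω h1 h2
        rw [ENNReal.ofReal_add h1 h2]))]
  exact lintegral_add_left' (ENNReal.measurable_ofReal.comp_aemeasurable
    (hφm.aemeasurable.restrict)) _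

lemma CE_lt_top (hF : F ≤ m0) (B : ℕ → Set Ω) (hB : ∀ k, MeasurableSet[F] (B k))
    (hfin : ∀ k, ∫⁻ ω in B k, ENNReal.ofReal (φ ω) ∂μ < ⊤)
    (hφm : AEStronglyMeasurable[m0] φ μ) (hφ : 0 ≤ᵐ[μ] φ)
    (hcover : ∀ᵐ ω ∂μ, ∃ k, ω ∈ B k) :
    ∀ᵐ ω ∂μ, CE F μ φ ω < ⊤ := by
  have h : ∀ k : ℕ, ∀ᵐ ω ∂μ, ω ∈ B k → CE F μ φ ω < ⊤ := by
    intro k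
    rw [← ae_restrict_iff' (hF _ (hB k))]
    refine ae_lt_top (measurable_CE.mono hF le_rfl) ?_
    rw [setLIntegral_CE hF hφm hφ (hB k)]
    exact (hfin k).ne
  filter_upwards [ae_all_iff.mpr h, hcover] with ω hω ⟨k, hk⟩
  exact hω k hk


lemma lintegral_eq_iSup_inter {h : Ω → ℝ≥0∞} (hm : AEMeasurable h μ) {A : Set Ω}
    (hA : MeasurableSet[m0] A) {S : ℕ → Set Ω} (hS : ∀ k, MeasurableSet[m0] (S k))
    (hmono : Monotone S) (hcover : ∀ ω, ∃ k, ω ∈ S k) :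
    ∫⁻ ω in A, h ω ∂μ = ⨆ k, ∫⁻ ω in A ∩ S k, h ω ∂μ := by
  have hind : ∀ k, ∫⁻ ω in A ∩ S k, h ω ∂μ = ∫⁻ ω, (A ∩ S k).indicator h ω ∂μ := fun k =>
    (lintegral_indicator (hA.inter (hS k)) h).symm
  have hAind : ∫⁻ ω in A, h ω ∂μ = ∫⁻ ω, A.indicator h ω ∂μ := (lintegral_indicator hA h).symm
  have hpt : ∀ ω, A.indicator h ω = ⨆ k, (A ∩ S k).indicator h ω := by
    intro ω
    rcases hcover ω with ⟨k, hk⟩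
    by_cases hωA : ω ∈ A
    · refine le_antisymm (le_iSup_of_le k (le_of_eq ?_)) (iSup_le fun l =>
        Set.indicator_le_indicator_of_subset Set.inter_subset_left (fun _ => zero_le) ω)
      rw [Set.indicator_of_mem hωA, Set.indicator_of_mem (Set.mem_inter hωA hk)]
    · simp [Set.indicator_of_notMem hωA,
        Set.indicator_of_notMem (fun hc : ω ∈ A ∩ S _ => hωA hc.1)]
  rw [hAind]
  simp_rw [hind]
  calc ∫⁻ ω, A.indicator h ω ∂μ = ∫⁻ ω, ⨆ k, (A ∩ S k).indicator h ω ∂μ :=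
        lintegral_congr hpt
    _ = ⨆ k, ∫⁻ ω, (A ∩ S k).indicator h ω ∂μ := by
        refine lintegral_iSup' (fun k => hm.indicator (hA.inter (hS k)))
          (ae_of_all _ fun ω k l hkl => Set.indicator_le_indicator_of_subset
            (Set.inter_subset_inter_right _ (hmono hkl)) (fun _ => zero_le) ω)

lemma CE_eq_of_eq {F1 F2 : MeasurableSpace Ω} (hF1 : F1 ≤ F2) (hF2 : F2 ≤ m0)
    {a b : Ω → ℝ} (ham : AEStronglyMeasurable[m0] a μ) (ha : 0 ≤ᵐ[μ] a)
    (hbm : AEStronglyMeasurable[m0] b μ) (hb : 0 ≤ᵐ[μ] b)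
    (h : CE F2 μ a =ᵐ[μ] CE F2 μ b) : CE F1 μ a =ᵐ[μ] CE F1 μ b := by
  refine CE_unique (hF1.trans hF2) measurable_CE measurable_CE fun A hA => ?_
  rw [setLIntegral_CE (hF1.trans hF2) ham ha hA, setLIntegral_CE (hF1.trans hF2) hbm hb hA,
    ← setLIntegral_CE hF2 ham ha (hF1 _ hA), ← setLIntegral_CE hF2 hbm hb (hF1 _ hA)]
  exact lintegral_congr_ae (ae_restrict_of_ae h)

lemma CE_lt_top_mono {F1 F2 : MeasurableSpace Ω} (hF1 : F1 ≤ F2) (hF2 : F2 ≤ m0)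
    (hφm : AEStronglyMeasurable[m0] φ μ) (hφ : 0 ≤ᵐ[μ] φ)
    (h : ∀ᵐ ω ∂μ, CE F1 μ φ ω < ⊤) : ∀ᵐ ω ∂μ, CE F2 μ φ ω < ⊤ := by
  refine CE_lt_top hF2 (fun k => {ω | CE F1 μ φ ω ≤ k}) (fun k => hF1 _ ?_) (fun k => ?_)
    hφm hφ ?_
  · exact @measurableSet_le _ _ _ _ _ F1 _ _ _ _ _ measurable_CE measurable_const
  · rw [← setLIntegral_CE (hF1.trans hF2) hφm hφ
      (@measurableSet_le _ _ _ _ _ F1 _ _ _ _ _ measurable_CE measurable_const)]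
    calc ∫⁻ ω in {ω | CE F1 μ φ ω ≤ k}, CE F1 μ φ ω ∂μ
        ≤ ∫⁻ _ in {ω | CE F1 μ φ ω ≤ k}, (k : ℝ≥0∞) ∂μ :=
          setLIntegral_mono_ae (aemeasurable_const) (ae_of_all _ fun ω hω => hω)
      _ = (k : ℝ≥0∞) * μ {ω | CE F1 μ φ ω ≤ k} := setLIntegral_const _ _
      _ < ⊤ := ENNReal.mul_lt_top (by simp) (measure_lt_top _ _)
  · filter_upwards [h] with ω hω
    rcases ENNReal.exists_nat_gt hω.ne with ⟨k, hk⟩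
    exact ⟨k, hk.le⟩

lemma max_sum_le {ι : Type*} (F : Finset ι) (a : ι → ℝ) :
    max (∑ s ∈ F, a s) 0 ≤ ∑ s ∈ F, max (a s) 0 :=
  max_le (Finset.sum_le_sum fun s _ => le_max_left _ _)
    (Finset.sum_nonneg fun s _ => le_max_right _ _)


lemma max_add_identity (a b : ℝ) :
    max (a + b) 0 + (max (-a) 0 + max (-b) 0) = max (-(a + b)) 0 + (max a 0 + max b 0) := by
  simp only [max_def]; split_ifs <;> linarith

lemma max_sub_le (a c : ℝ) : max (a - c) 0 ≤ max a 0 + max (-c) 0 := by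
  simp only [max_def]; split_ifs <;> linarith

lemma posneg_decomp (a : ℝ) : a = max a 0 - max (-a) 0 := by
  simp only [max_def]; split_ifs <;> linarith

lemma CE_lt_top_of_integrable (hF : F ≤ m0) (hφm : AEStronglyMeasurable[m0] φ μ)
    (hφ : 0 ≤ᵐ[μ] φ) (hint : Integrable φ μ) : ∀ᵐ ω ∂μ, CE F μ φ ω < ⊤ := by
  refine ae_lt_top (measurable_CE.mono hF le_rfl) ?_
  have h1 : ∫⁻ ω, CE F μ φ ω ∂μ = ∫⁻ ω, ENNReal.ofReal (φ ω) ∂μ := by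
    simpa [Measure.restrict_univ] using
      setLIntegral_CE hF hφm hφ (MeasurableSet.univ (α := Ω))
  rw [h1, ← ofReal_integral_eq_lintegral_ofReal hint hφ]
  exact ENNReal.ofReal_ne_top

lemma lintegral_CE (hF : F ≤ m0) (hφm : AEStronglyMeasurable[m0] φ μ) (hφ : 0 ≤ᵐ[μ] φ) :
    ∫⁻ ω, CE F μ φ ω ∂μ = ∫⁻ ω, ENNReal.ofReal (φ ω) ∂μ := by
  simpa [Measure.restrict_univ] using setLIntegral_CE hF hφm hφ (MeasurableSet.univ (α := Ω))

lemma main_aux {T : ℕ} (𝓕 : Filtration (Fin (T + 1)) m0) (f : Fin (T + 1) → Ω → ℝ)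
    (hfm : ∀ t, AEStronglyMeasurable[m0] (f t) μ)
    (hstar : ∀ t, CE (𝓕 t) μ (fun ω => max (f t ω) 0)
      =ᵐ[μ] CE (𝓕 t) μ (fun ω => max (-f t ω) 0))
    (hfinn : ∀ t, ∀ᵐ ω ∂μ, CE (𝓕 t) μ (fun ω => max (-f t ω) 0) ω < ⊤)
    (hpos : Integrable (fun ω => max (∑ t, f t ω) 0) μ) :
    Integrable (fun ω => ∑ t, f t ω) μ ∧ ∫ ω, ∑ t, f t ω ∂μ = 0 := by
  classical
  set r : Fin (T + 1) → Ω → ℝ := fun t ω => ∑ s ∈ Finset.Ici t, f s ω with hr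
  have hrm : ∀ t, AEStronglyMeasurable (r t) μ := fun t =>
    Finset.aestronglyMeasurable_fun_sum _ fun s _ => hfm s
  have hgm : AEStronglyMeasurable (fun ω => ∑ t, f t ω) μ :=
    Finset.aestronglyMeasurable_fun_sum _ fun s _ => hfm s
  have posm : ∀ h : Ω → ℝ, AEStronglyMeasurable h μ →
      AEStronglyMeasurable (fun ω => max (h ω) 0) μ := fun h hm =>
    hm.sup (aestronglyMeasurable_const (b := (0 : ℝ)))
  have posnn : ∀ h : Ω → ℝ, 0 ≤ᵐ[μ] fun ω => max (h ω) 0 := fun h =>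
    ae_of_all _ fun ω => le_max_right _ _
  have hnegfm : ∀ s, AEStronglyMeasurable (fun ω => max (-f s ω) 0) μ := fun s =>
    (hfm s).neg.sup (aestronglyMeasurable_const (b := (0:ℝ)))
  have hneggm : AEStronglyMeasurable (fun ω => max (-(∑ u, f u ω)) 0) μ :=
    hgm.neg.sup (aestronglyMeasurable_const (b := (0:ℝ)))
  have main : ∀ t, CE (𝓕 t) μ (fun ω => max (r t ω) 0)
      =ᵐ[μ] CE (𝓕 t) μ (fun ω => max (-r t ω) 0) := by
    intro t
    induction t using Fin.reverseInduction with
    | last =>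
      have hrl : (fun ω => r (Fin.last T) ω) = f (Fin.last T) := by
        funext ω
        have hIci : Finset.Ici (Fin.last T) = {Fin.last T} := by
          ext s; simp [Finset.mem_Ici, Fin.last_le_iff]
        rw [hr]; simp only [hIci, Finset.sum_singleton]
      have h1 : (fun ω => max (r (Fin.last T) ω) 0) = fun ω => max (f (Fin.last T) ω) 0 := by
        funext ω; rw [show r (Fin.last T) ω = f (Fin.last T) ω from congrFun hrl ω]
      have h2 : (fun ω => max (-r (Fin.last T) ω) 0) = fun ω => max (-f (Fin.last T) ω) 0 := by
        funext ω; rw [show r (Fin.last T) ω = f (Fin.last T) ω from congrFun hrl ω]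
      rw [h1, h2]; exact hstar _
    | cast i ih =>
      set t := i.castSucc with ht
      set t' := i.succ with ht'
      have hFt : 𝓕 t ≤ m0 := 𝓕.le t
      have hlet : 𝓕 t ≤ 𝓕 t' := 𝓕.mono (Fin.castSucc_lt_succ (i := i)).le
      have hsplit : ∀ ω, r t ω = f t ω + r t' ω := by
        intro ω
        have hins : Finset.Ici t = insert t (Finset.Ici t') := by
          ext s
          simp only [Finset.mem_Ici, Finset.mem_insert]
          constructor
          · intro h
            rcases eq_or_lt_of_le h with h' | h'
            · exact Or.inl h'.symm
            · exact Or.inr (Fin.castSucc_lt_iff_succ_le.mp h')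
          · rintro (rfl | h)
            · exact le_rfl
            · exact (Fin.castSucc_lt_iff_succ_le.mpr h).le
        have hnm : t ∉ Finset.Ici t' := by
          simp only [Finset.mem_Ici]; exact not_le.mpr (Fin.castSucc_lt_succ (i := i))
        rw [hr]
        simp only [hins, Finset.sum_insert hnm]
      -- abbreviations
      set A : Ω → ℝ := fun ω => max (r t ω) 0 with hA
      set A' : Ω → ℝ := fun ω => max (-r t ω) 0 with hA'
      set B : Ω → ℝ := fun ω => max (-f t ω) 0 with hB
      set B' : Ω → ℝ := fun ω => max (f t ω) 0 with hB'
      set C : Ω → ℝ := fun ω => max (-r t' ω) 0 with hC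
      set C' : Ω → ℝ := fun ω => max (r t' ω) 0 with hC'
      have hAm : AEStronglyMeasurable A μ := posm _ (hrm t)
      have hA'm : AEStronglyMeasurable A' μ := posm _ (hrm t).neg
      have hBm : AEStronglyMeasurable B μ := posm _ (hfm t).neg
      have hB'm : AEStronglyMeasurable B' μ := posm _ (hfm t)
      have hCm : AEStronglyMeasurable C μ := posm _ (hrm t').neg
      have hC'm : AEStronglyMeasurable C' μ := posm _ (hrm t')
      have hAnn : 0 ≤ᵐ[μ] A := posnn _
      have hA'nn : 0 ≤ᵐ[μ] A' := posnn _
      have hBnn : 0 ≤ᵐ[μ] B := posnn _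
      have hB'nn : 0 ≤ᵐ[μ] B' := posnn _
      have hCnn : 0 ≤ᵐ[μ] C := posnn _
      have hC'nn : 0 ≤ᵐ[μ] C' := posnn _
      have hpoint : (fun ω => A ω + (B ω + C ω)) = fun ω => A' ω + (B' ω + C' ω) := by
        funext ω
        rw [hA, hA', hB, hB', hC, hC']
        simp only [hsplit ω]
        exact max_add_identity (f t ω) (r t' ω)
      have hBCm : AEStronglyMeasurable (fun ω => B ω + C ω) μ := hBm.add hCm
      have hB'C'm : AEStronglyMeasurable (fun ω => B' ω + C' ω) μ := hB'm.add hC'm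
      have hBCnn : 0 ≤ᵐ[μ] fun ω => B ω + C ω := by
        filter_upwards [hBnn, hCnn] with ω h1 h2; exact add_nonneg h1 h2
      have hB'C'nn : 0 ≤ᵐ[μ] fun ω => B' ω + C' ω := by
        filter_upwards [hB'nn, hC'nn] with ω h1 h2; exact add_nonneg h1 h2
      have hL : CE (𝓕 t) μ (fun ω => A ω + (B ω + C ω))
          =ᵐ[μ] fun ω => CE (𝓕 t) μ A ω + (CE (𝓕 t) μ B ω + CE (𝓕 t) μ C ω) := by
        refine (CE_add hFt hAm hAnn hBCm hBCnn).trans ?_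
        filter_upwards [CE_add hFt hBm hBnn hCm hCnn] with ω h
        rw [h]
      have hRt : CE (𝓕 t) μ (fun ω => A' ω + (B' ω + C' ω))
          =ᵐ[μ] fun ω => CE (𝓕 t) μ A' ω + (CE (𝓕 t) μ B' ω + CE (𝓕 t) μ C' ω) := by
        refine (CE_add hFt hA'm hA'nn hB'C'm hB'C'nn).trans ?_
        filter_upwards [CE_add hFt hB'm hB'nn hC'm hC'nn] with ω h
        rw [h]
      have hCEeq : CE (𝓕 t) μ (fun ω => A ω + (B ω + C ω))
          = CE (𝓕 t) μ (fun ω => A' ω + (B' ω + C' ω)) := by rw [hpoint]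
      -- transfer of ih to level t
      have hCC' : CE (𝓕 t) μ C' =ᵐ[μ] CE (𝓕 t) μ C :=
        CE_eq_of_eq hlet (𝓕.le t') hC'm hC'nn hCm hCnn ih
      -- finiteness of CE (pos (r t')) at level t
      have hWfin : ∀ᵐ ω ∂μ, CE (𝓕 t) μ C' ω < ⊤ := by
        set W : Ω → ℝ := fun ω => max (∑ u, f u ω) 0 + ∑ s ∈ Finset.Iio t', max (-f s ω) 0
          with hWdef
        have hWm : AEStronglyMeasurable W μ := (posm _ hgm).add
          (Finset.aestronglyMeasurable_fun_sum _ fun s _ => hnegfm s)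
        have hWnn : 0 ≤ᵐ[μ] W := ae_of_all _ fun ω =>
          add_nonneg (le_max_right _ _) (Finset.sum_nonneg fun s _ => le_max_right _ _)
        have hgsplit : ∀ ω, r t' ω = (∑ u, f u ω) - ∑ s ∈ Finset.Iio t', f s ω := by
          intro ω
          have hun : Finset.Iio t' ∪ Finset.Ici t' = Finset.univ := by
            ext s; simp [Finset.mem_Iio, Finset.mem_Ici, lt_or_ge]
          have hdisj : Disjoint (Finset.Iio t') (Finset.Ici t') := by
            simp only [Finset.disjoint_left, Finset.mem_Iio, Finset.mem_Ici]
            exact fun a ha => not_le.mpr ha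
          have : ∑ u, f u ω = (∑ s ∈ Finset.Iio t', f s ω) + ∑ s ∈ Finset.Ici t', f s ω := by
            rw [← Finset.sum_union hdisj, hun]
          rw [hr]; linarith [this]
        have hbound : ∀ ω, C' ω ≤ W ω := by
          intro ω
          rw [hC', hWdef]
          simp only [hgsplit ω]
          refine (max_sub_le _ _).trans (add_le_add (le_refl _) ?_)
          rw [show -(∑ s ∈ Finset.Iio t', f s ω) = ∑ s ∈ Finset.Iio t', -f s ω by
            rw [Finset.sum_neg_distrib]]
          exact max_sum_le _ _
        have hCEmono := CE_mono (F := 𝓕 t) hC'm hC'nn hWm hWnn (ae_of_all _ hbound)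
        have hCEg : ∀ᵐ ω ∂μ, CE (𝓕 t) μ (fun ω => max (∑ u, f u ω) 0) ω < ⊤ :=
          CE_lt_top_of_integrable hFt (posm _ hgm) (posnn _) hpos
        have hCEs : ∀ s : Fin (T + 1), s < t' →
            ∀ᵐ ω ∂μ, CE (𝓕 t) μ (fun ω => max (-f s ω) 0) ω < ⊤ := fun s hs =>
          CE_lt_top_mono (𝓕.mono (Fin.le_castSucc_iff.mpr hs)) hFt
            (hnegfm s) (posnn _) (hfinn s)
        set Bk : ℕ → Set Ω := fun k =>
          {ω | CE (𝓕 t) μ (fun ω => max (∑ u, f u ω) 0) ω ≤ k} ∩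
            ⋂ s ∈ Finset.Iio t', {ω | CE (𝓕 t) μ (fun ω => max (-f s ω) 0) ω ≤ k} with hBk
        have hBkm : ∀ k, MeasurableSet[𝓕 t] (Bk k) := by
          intro k
          refine MeasurableSet.inter ?_ (MeasurableSet.biInter (Set.to_countable _) fun s _ => ?_)
          · exact measurableSet_le measurable_CE measurable_const
          · exact measurableSet_le measurable_CE measurable_const
        have hBkfin : ∀ k, ∫⁻ ω in Bk k, ENNReal.ofReal (W ω) ∂μ < ⊤ := by
          intro k
          have hsplitW : ∫⁻ ω in Bk k, ENNReal.ofReal (W ω) ∂μ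
              = (∫⁻ ω in Bk k, ENNReal.ofReal (max (∑ u, f u ω) 0) ∂μ)
                + ∑ s ∈ Finset.Iio t', ∫⁻ ω in Bk k, ENNReal.ofReal (max (-f s ω) 0) ∂μ := by
            have hptW : ∀ ω, ENNReal.ofReal (W ω)
                = ENNReal.ofReal (max (∑ u, f u ω) 0)
                  + ∑ s ∈ Finset.Iio t', ENNReal.ofReal (max (-f s ω) 0) := by
              intro ω
              rw [hWdef]
              rw [ENNReal.ofReal_add (le_max_right _ _)
                (Finset.sum_nonneg fun s _ => le_max_right _ _),
                ENNReal.ofReal_sum_of_nonneg fun s _ => le_max_right _ _]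
            have h1am : AEMeasurable (fun ω => ENNReal.ofReal (max (∑ u, f u ω) 0))
                (μ.restrict (Bk k)) := ENNReal.measurable_ofReal.comp_aemeasurable
                ((posm _ hgm).aemeasurable.restrict)
            have h2am : ∀ s ∈ Finset.Iio t', AEMeasurable
                (fun ω => ENNReal.ofReal (max (-f s ω) 0)) (μ.restrict (Bk k)) := fun s _ =>
              ENNReal.measurable_ofReal.comp_aemeasurable ((hnegfm s).aemeasurable.restrict)
            rw [lintegral_congr fun ω => hptW ω, lintegral_add_left' h1am,
              lintegral_finset_sum' _ h2am]
          rw [hsplitW]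
          have hterm1 : ∫⁻ ω in Bk k, ENNReal.ofReal (max (∑ u, f u ω) 0) ∂μ < ⊤ := by
            rw [← setLIntegral_CE hFt (posm _ hgm) (posnn _) (hBkm k)]
            calc ∫⁻ ω in Bk k, CE (𝓕 t) μ (fun ω => max (∑ u, f u ω) 0) ω ∂μ
                ≤ ∫⁻ _ in Bk k, (k : ℝ≥0∞) ∂μ := setLIntegral_mono_ae aemeasurable_const
                  (ae_of_all _ fun ω hω => hω.1)
              _ = (k : ℝ≥0∞) * μ (Bk k) := setLIntegral_const _ _
              _ < ⊤ := ENNReal.mul_lt_top (by simp) (measure_lt_top _ _)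
          have hterm2 : ∀ s ∈ Finset.Iio t',
              ∫⁻ ω in Bk k, ENNReal.ofReal (max (-f s ω) 0) ∂μ < ⊤ := by
            intro s hs
            rw [← setLIntegral_CE hFt (hnegfm s) (posnn _) (hBkm k)]
            calc ∫⁻ ω in Bk k, CE (𝓕 t) μ (fun ω => max (-f s ω) 0) ω ∂μ
                ≤ ∫⁻ _ in Bk k, (k : ℝ≥0∞) ∂μ := setLIntegral_mono_ae aemeasurable_const
                  (ae_of_all _ fun ω hω => by
                    have := hω.2
                    simp only [Set.mem_iInter] at this
                    exact this s hs)
              _ = (k : ℝ≥0∞) * μ (Bk k) := setLIntegral_const _ _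
              _ < ⊤ := ENNReal.mul_lt_top (by simp) (measure_lt_top _ _)
          exact ENNReal.add_lt_top.mpr ⟨hterm1, ENNReal.sum_lt_top.mpr hterm2⟩
        have hcover : ∀ᵐ ω ∂μ, ∃ k, ω ∈ Bk k := by
          have hall : ∀ᵐ ω ∂μ, ∀ s : Fin (T + 1), s < t' →
              CE (𝓕 t) μ (fun ω => max (-f s ω) 0) ω < ⊤ := by
            refine ae_all_iff.mpr fun s => ?_
            by_cases h : s < t'
            · filter_upwards [hCEs s h] with ω hω _
              exact hω
            · exact ae_of_all _ fun ω hs => absurd hs h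
          filter_upwards [hCEg, hall] with ω h1 h2
          set M : ℝ≥0∞ := CE (𝓕 t) μ (fun ω => max (∑ u, f u ω) 0) ω ⊔
            (Finset.Iio t').sup (fun s => CE (𝓕 t) μ (fun ω => max (-f s ω) 0) ω) with hM
          have hMlt : M < ⊤ := by
            rw [hM, sup_lt_iff]
            exact ⟨h1, Finset.sup_lt_iff (by simp) |>.mpr fun s hs => h2 s (Finset.mem_Iio.mp hs)⟩
          rcases ENNReal.exists_nat_gt hMlt.ne with ⟨k, hk⟩
          refine ⟨k, ⟨?_, ?_⟩⟩
          · exact le_trans (le_sup_left.trans hk.le) le_rfl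
          · simp only [Set.mem_iInter]
            intro s hs
            exact le_trans ((Finset.le_sup (f := fun s =>
              CE (𝓕 t) μ (fun ω => max (-f s ω) 0) ω) hs).trans le_sup_right) hk.le
        have hWlt := CE_lt_top hFt Bk hBkm hBkfin hWm hWnn hcover
        filter_upwards [hCEmono, hWlt] with ω h1 h2
        exact lt_of_le_of_lt h1 h2
      -- cancellation
      have hCfin : ∀ᵐ ω ∂μ, CE (𝓕 t) μ C ω < ⊤ := by
        filter_upwards [hCC', hWfin] with ω h1 h2
        rw [← h1]; exact h2
      show CE (𝓕 t) μ A =ᵐ[μ] CE (𝓕 t) μ A'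
      filter_upwards [hL, hRt, hstar t, hCC', hfinn t, hCfin] with ω hLω hRω hBω hCω hBfinω hCfinω
      have heq : CE (𝓕 t) μ A ω + (CE (𝓕 t) μ B ω + CE (𝓕 t) μ C ω)
          = CE (𝓕 t) μ A' ω + (CE (𝓕 t) μ B ω + CE (𝓕 t) μ C ω) := by
        rw [← hLω]
        rw [hCEeq, hRω]
        rw [show CE (𝓕 t) μ B' ω = CE (𝓕 t) μ B ω from hBω, show CE (𝓕 t) μ C' ω
          = CE (𝓕 t) μ C ω from hCω]
      have hwne : CE (𝓕 t) μ B ω + CE (𝓕 t) μ C ω ≠ ⊤ :=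
        (ENNReal.add_lt_top.mpr ⟨hBfinω, hCfinω⟩).ne
      rw [add_comm (CE (𝓕 t) μ A ω) _, add_comm (CE (𝓕 t) μ A' ω) _] at heq
      exact (ENNReal.add_right_inj hwne).mp heq
  -- conclude from t = 0
  have hr0 : (fun ω => r 0 ω) = fun ω => ∑ u, f u ω := by
    funext ω
    have h0 : (Finset.Ici (0 : Fin (T + 1))) = Finset.univ := by
      ext s; simp [Finset.mem_Ici, Fin.zero_le]
    rw [hr]; simp only [h0]
  have hQ0 := main 0
  rw [show (fun ω => max (r 0 ω) 0) = fun ω => max (∑ u, f u ω) 0 from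
      funext fun ω => by rw [show r 0 ω = ∑ u, f u ω from congrFun hr0 ω],
    show (fun ω => max (-r 0 ω) 0) = fun ω => max (-(∑ u, f u ω)) 0 from
      funext fun ω => by rw [show r 0 ω = ∑ u, f u ω from congrFun hr0 ω]] at hQ0
  have hF0 : 𝓕 0 ≤ m0 := 𝓕.le 0
  have hlin : ∫⁻ ω, ENNReal.ofReal (max (∑ u, f u ω) 0) ∂μ
      = ∫⁻ ω, ENNReal.ofReal (max (-(∑ u, f u ω)) 0) ∂μ := by
    rw [← lintegral_CE hF0 (posm _ hgm) (posnn _),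
      ← lintegral_CE hF0 hneggm (posnn _)]
    exact lintegral_congr_ae hQ0
  have e2 : ENNReal.ofReal (∫ ω, max (∑ u, f u ω) 0 ∂μ)
      = ∫⁻ ω, ENNReal.ofReal (max (∑ u, f u ω) 0) ∂μ :=
    ofReal_integral_eq_lintegral_ofReal hpos (posnn _)
  have hnegint : Integrable (fun ω => max (-(∑ u, f u ω)) 0) μ := by
    refine ⟨hneggm, ?_⟩
    rw [hasFiniteIntegral_iff_norm]
    have : ∀ ω, ‖max (-(∑ u, f u ω)) 0‖ = max (-(∑ u, f u ω)) 0 := fun ω =>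
      Real.norm_of_nonneg (le_max_right _ _)
    rw [show (fun ω => ENNReal.ofReal ‖max (-(∑ u, f u ω)) 0‖)
        = fun ω => ENNReal.ofReal (max (-(∑ u, f u ω)) 0) from funext fun ω => by rw [this ω]]
    · rw [← hlin, ← e2]
      exact ENNReal.ofReal_lt_top
  have hdecomp : (fun ω => ∑ u, f u ω)
      = fun ω => max (∑ u, f u ω) 0 - max (-(∑ u, f u ω)) 0 :=
    funext fun ω => posneg_decomp _
  have hint : Integrable (fun ω => ∑ u, f u ω) μ := by
    rw [hdecomp]; exact hpos.sub hnegint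
  have hofReal : ENNReal.ofReal (∫ ω, max (∑ u, f u ω) 0 ∂μ)
      = ENNReal.ofReal (∫ ω, max (-(∑ u, f u ω)) 0 ∂μ) := by
    rw [e2, ofReal_integral_eq_lintegral_ofReal hnegint (posnn _), hlin]
  have hinteq : ∫ ω, max (∑ u, f u ω) 0 ∂μ = ∫ ω, max (-(∑ u, f u ω)) 0 ∂μ :=
    (ENNReal.ofReal_eq_ofReal_iff (integral_nonneg fun ω => le_max_right _ _)
      (integral_nonneg fun ω => le_max_right _ _)).mp hofReal
  refine ⟨hint, ?_⟩
  rw [hdecomp, integral_sub hpos hnegint, hinteq, sub_self]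

end Stmt12Aux

open Stmt12Aux in
/-- If `x` is an adapted process and `v ∈ N^⊥` (i.e. `v ∈ L¹` and `E[x'·v] = 0` for every bounded
adapted `x'`), and the positive part of `x·v := Σ_t x_t·v_t` is integrable, then `E[x·v] = 0`. -/
theorem stmt12 {Ω : Type*} {m0 : MeasurableSpace Ω} (P : Measure Ω) [IsProbabilityMeasure P]
    {n T : ℕ} (𝓕 : Filtration (Fin (T + 1)) m0)
    (x v : Ω → Fin (T + 1) → Fin n → ℝ)
    (hx : ∀ t, Measurable[𝓕 t] fun ω => x ω t)
    (hv : ∀ t i, Integrable (fun ω => v ω t i) P)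
    (hperp : ∀ x' : Ω → Fin (T + 1) → Fin n → ℝ,
      (∀ t, Measurable[𝓕 t] fun ω => x' ω t) →
      (∃ C : ℝ, ∀ ω t i, |x' ω t i| ≤ C) →
      ∫ ω, ∑ t, ∑ i, x' ω t i * v ω t i ∂P = 0)
    (hpos : Integrable (fun ω => max (∑ t, ∑ i, x ω t i * v ω t i) 0) P) :
    Integrable (fun ω => ∑ t, ∑ i, x ω t i * v ω t i) P ∧
    ∫ ω, ∑ t, ∑ i, x ω t i * v ω t i ∂P = 0 := by
  classical
  have hxtm : ∀ t i, Measurable[𝓕 t] fun ω => x ω t i := fun t i =>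
    (measurable_pi_apply i).comp (hx t)
  have hxm : ∀ t i, Measurable fun ω => x ω t i := fun t i => (hxtm t i).mono (𝓕.le t) le_rfl
  set f : Fin (T + 1) → Ω → ℝ := fun t ω => ∑ i, x ω t i * v ω t i with hf
  have hfm : ∀ t, AEStronglyMeasurable (f t) P := fun t =>
    Finset.aestronglyMeasurable_fun_sum _ fun i _ =>
      ((hxm t i).aestronglyMeasurable.mul (hv t i).1)
  have hposm : ∀ t, AEStronglyMeasurable (fun ω => max (f t ω) 0) P := fun t =>
    (hfm t).sup (aestronglyMeasurable_const (b := (0:ℝ)))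
  have hnegm : ∀ t, AEStronglyMeasurable (fun ω => max (-f t ω) 0) P := fun t =>
    (hfm t).neg.sup (aestronglyMeasurable_const (b := (0:ℝ)))
  have hposnn : ∀ t, 0 ≤ᵐ[P] fun ω => max (f t ω) 0 := fun t =>
    ae_of_all _ fun ω => le_max_right _ _
  have hnegnn : ∀ t, 0 ≤ᵐ[P] fun ω => max (-f t ω) 0 := fun t =>
    ae_of_all _ fun ω => le_max_right _ _
  have hV : ∀ t, Integrable (fun ω => ∑ i, |v ω t i|) P := fun t =>
    integrable_finset_sum _ fun i _ => (hv t i).abs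
  set S : Fin (T + 1) → ℕ → Set Ω := fun t k => {ω | ∀ i, |x ω t i| ≤ k} with hS
  have hSmeas : ∀ t k, MeasurableSet[𝓕 t] (S t k) := by
    intro t k
    have h : S t k = ⋂ i, {ω | |x ω t i| ≤ (k : ℝ)} := by
      ext ω; simp [hS, Set.mem_iInter, Set.mem_setOf_eq]
    rw [h]
    exact MeasurableSet.iInter fun i => (measurable_abs.comp (hxtm t i)) measurableSet_Iic
  have hSmono : ∀ t, Monotone (S t) := fun t k l hkl ω hω i =>
    (hω i).trans (Nat.cast_le.mpr hkl)
  have hScover : ∀ t ω, ∃ k, ω ∈ S t k := by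
    intro t ω
    refine ⟨⌈∑ i, |x ω t i|⌉₊, fun i => ?_⟩
    calc |x ω t i| ≤ ∑ j, |x ω t j| :=
          Finset.single_le_sum (f := fun j => |x ω t j|) (fun j _ => abs_nonneg _) (Finset.mem_univ i)
      _ ≤ _ := Nat.le_ceil _
  have hbnd : ∀ t (k : ℕ) ω, ω ∈ S t k → |f t ω| ≤ (k : ℝ) * ∑ i, |v ω t i| := by
    intro t k ω hω
    calc |f t ω| ≤ ∑ i, |x ω t i * v ω t i| := Finset.abs_sum_le_sum_abs _ _
      _ ≤ ∑ i, (k : ℝ) * |v ω t i| := Finset.sum_le_sum fun i _ => by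
          rw [abs_mul]; exact mul_le_mul_of_nonneg_right (hω i) (abs_nonneg _)
      _ = (k : ℝ) * ∑ i, |v ω t i| := by rw [Finset.mul_sum]
  have hzero : ∀ (t : Fin (T + 1)) (k : ℕ) (A : Set Ω), MeasurableSet[𝓕 t] A →
      ∫ ω in A ∩ S t k, f t ω ∂P = 0 := by
    intro t k A hA
    set B : Set Ω := A ∩ S t k with hBdef
    have hBt : MeasurableSet[𝓕 t] B := hA.inter (hSmeas t k)
    have hBm0 : MeasurableSet B := (𝓕.le t) _ hBt
    set x' : Ω → Fin (T + 1) → Fin n → ℝ :=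
      fun ω s i => if s = t then B.indicator (fun ω' => x ω' t i) ω else 0 with hx'
    have had : ∀ s, Measurable[𝓕 s] fun ω => x' ω s := by
      intro s
      by_cases hs : s = t
      · subst hs
        refine (@measurable_pi_iff Ω (Fin n) (fun _ => ℝ) (𝓕 s) _ _).mpr fun i => ?_
        simp only [hx', if_pos rfl]
        exact (hxtm s i).indicator hBt
      · refine (@measurable_pi_iff Ω (Fin n) (fun _ => ℝ) (𝓕 s) _ _).mpr fun i => ?_
        simp only [hx', if_neg hs]
        exact @measurable_const ℝ Ω _ (𝓕 s) _
    have hbd : ∃ C : ℝ, ∀ ω s i, |x' ω s i| ≤ C := by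
      refine ⟨k, fun ω s i => ?_⟩
      by_cases hs : s = t
      · subst hs; simp only [hx', if_pos rfl]
        by_cases hω : ω ∈ B
        · rw [Set.indicator_of_mem hω]; exact hω.2 i
        · rw [Set.indicator_of_notMem hω]; simp
      · simp only [hx', if_neg hs]; simp
    have h0 := hperp x' had hbd
    have hval : ∀ ω, ∑ s, ∑ i, x' ω s i * v ω s i = B.indicator (f t) ω := by
      intro ω
      rw [Finset.sum_eq_single t]
      · by_cases hω : ω ∈ B
        · rw [Set.indicator_of_mem hω]
          refine Finset.sum_congr rfl fun i _ => by
            simp only [hx', if_pos rfl]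
            rw [Set.indicator_of_mem hω]
        · rw [Set.indicator_of_notMem hω]
          refine Finset.sum_eq_zero fun i _ => by
            simp only [hx', if_pos rfl]
            rw [Set.indicator_of_notMem hω, zero_mul]
      · intro s _ hst
        refine Finset.sum_eq_zero fun i _ => by simp only [hx', if_neg hst, zero_mul]
      · intro h; exact absurd (Finset.mem_univ t) h
    rw [← integral_indicator hBm0]
    calc ∫ ω, B.indicator (f t) ω ∂P = ∫ ω, ∑ s, ∑ i, x' ω s i * v ω s i ∂P :=
          integral_congr_ae (ae_of_all _ fun ω => (hval ω).symm)
      _ = 0 := h0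
  have hIntOn : ∀ (t : Fin (T + 1)) (k : ℕ) (B : Set Ω), MeasurableSet B → B ⊆ S t k →
      IntegrableOn (f t) B P := by
    intro t k B hBm0 hBsub
    refine Integrable.mono' (((hV t).const_mul (k : ℝ)).restrict) ((hfm t).restrict) ?_
    rw [ae_restrict_iff' hBm0]
    exact ae_of_all _ fun ω hω => by rw [Real.norm_eq_abs]; exact hbnd t k ω (hBsub hω)
  have hstar : ∀ t, CE (𝓕 t) P (fun ω => max (f t ω) 0)
      =ᵐ[P] CE (𝓕 t) P (fun ω => max (-f t ω) 0) := by
    intro t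
    refine CE_unique (𝓕.le t) measurable_CE measurable_CE fun A hA => ?_
    have hAm0 : MeasurableSet A := (𝓕.le t) _ hA
    have hmp : AEMeasurable (fun ω => ENNReal.ofReal (max (f t ω) 0)) P :=
      ENNReal.measurable_ofReal.comp_aemeasurable (hposm t).aemeasurable
    have hmn : AEMeasurable (fun ω => ENNReal.ofReal (max (-f t ω) 0)) P :=
      ENNReal.measurable_ofReal.comp_aemeasurable (hnegm t).aemeasurable
    rw [setLIntegral_CE (𝓕.le t) (hposm t) (hposnn t) hA,
      setLIntegral_CE (𝓕.le t) (hnegm t) (hnegnn t) hA,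
      lintegral_eq_iSup_inter hmp hAm0 (fun k => (𝓕.le t) _ (hSmeas t k)) (hSmono t)
        (hScover t),
      lintegral_eq_iSup_inter hmn hAm0 (fun k => (𝓕.le t) _ (hSmeas t k)) (hSmono t)
        (hScover t)]
    refine iSup_congr fun k => ?_
    have hBm0 : MeasurableSet (A ∩ S t k) := hAm0.inter ((𝓕.le t) _ (hSmeas t k))
    have hint : IntegrableOn (f t) (A ∩ S t k) P := hIntOn t k _ hBm0 Set.inter_subset_right
    have hintp : IntegrableOn (fun ω => max (f t ω) 0) (A ∩ S t k) P := hint.pos_part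
    have hintn : IntegrableOn (fun ω => max (-f t ω) 0) (A ∩ S t k) P := hint.neg.pos_part
    have hsub : ∫ ω in A ∩ S t k, max (f t ω) 0 ∂P = ∫ ω in A ∩ S t k, max (-f t ω) 0 ∂P := by
      have h1 : ∫ ω in A ∩ S t k, (max (f t ω) 0 - max (-f t ω) 0) ∂P
          = ∫ ω in A ∩ S t k, max (f t ω) 0 ∂P - ∫ ω in A ∩ S t k, max (-f t ω) 0 ∂P :=
        integral_sub hintp hintn
      have h2 : ∫ ω in A ∩ S t k, (max (f t ω) 0 - max (-f t ω) 0) ∂P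
          = ∫ ω in A ∩ S t k, f t ω ∂P :=
        integral_congr_ae (ae_of_all _ fun ω => (posneg_decomp (f t ω)).symm)
      have h3 := hzero t k A hA
      rw [h2, h3] at h1
      linarith
    rw [← ofReal_integral_eq_lintegral_ofReal hintp (ae_restrict_of_ae (hposnn t)),
      ← ofReal_integral_eq_lintegral_ofReal hintn (ae_restrict_of_ae (hnegnn t)), hsub]
  have hfinn : ∀ t, ∀ᵐ ω ∂P, CE (𝓕 t) P (fun ω => max (-f t ω) 0) ω < ⊤ := by
    intro t
    refine CE_lt_top (𝓕.le t) (S t) (hSmeas t) (fun k => ?_) (hnegm t) (hnegnn t)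
      (ae_of_all _ fun ω => hScover t ω)
    have hb : ∫⁻ ω in S t k, ENNReal.ofReal (max (-f t ω) 0) ∂P
        ≤ ∫⁻ ω in S t k, ENNReal.ofReal ((k : ℝ) * ∑ i, |v ω t i|) ∂P := by
      refine setLIntegral_mono_ae (ENNReal.measurable_ofReal.comp_aemeasurable
        (((hV t).const_mul (k : ℝ)).aemeasurable.restrict)) (ae_of_all _ fun ω hω => ?_)
      refine ENNReal.ofReal_le_ofReal (max_le ?_ ?_)
      · exact (neg_le_abs _).trans (hbnd t k ω hω)
      · exact le_trans (abs_nonneg _) (hbnd t k ω hω)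
    refine lt_of_le_of_lt hb (lt_of_le_of_lt (setLIntegral_le_lintegral _ _) ?_)
    rw [← ofReal_integral_eq_lintegral_ofReal ((hV t).const_mul (k : ℝ))
      (ae_of_all _ fun ω => mul_nonneg (Nat.cast_nonneg _)
        (Finset.sum_nonneg fun i _ => abs_nonneg _))]
    exact ENNReal.ofReal_lt_top
  exact main_aux 𝓕 f hfm hstar hfinn hpos
end

section
/- In the optimal stopping duality: a stopping time τ is optimal for maximizing E R_τ and (p,y) ∈ X_a^⊥ × Y_+ solves the dual (minimize E y subject to p_t + R_t ≤ y a.s. for all t) with no duality gap, if and only if p_t + R_t ≤ y for all t and p_τ + R_τ = y almost surely. -/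
open MeasureTheory

section Aux

variable {Ω : Type*} {m0 : MeasurableSpace Ω} {P : Measure Ω} [IsProbabilityMeasure P]
  {T : ℕ} {𝓕 : Filtration ℕ m0} {σ : Ω → ℕ}

private lemma aux_split (f : ℕ → Ω → ℝ) (ω : Ω) :
    (if σ ω ≤ T then f (σ ω) ω else 0)
      = ∑ t ∈ Finset.range (T + 1), if t = σ ω then f t ω else 0 := by
  rw [Finset.sum_ite_eq' (Finset.range (T + 1)) (σ ω) (fun t => f t ω)]
  simp [Finset.mem_range, Nat.lt_succ_iff]

private lemma aux_meq (hσ : IsStoppingTime 𝓕 (fun ω => (σ ω : WithTop ℕ))) (t : ℕ) :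
    MeasurableSet[𝓕 t] {ω | σ ω = t} := by
  have := hσ.measurableSet_eq t
  simpa using this

private lemma aux_meas (hσ : IsStoppingTime 𝓕 (fun ω => (σ ω : WithTop ℕ))) (t : ℕ) : MeasurableSet {ω | σ ω = t} :=
  𝓕.le t _ (aux_meq hσ t)

private lemma aux_term_int (hσ : IsStoppingTime 𝓕 (fun ω => (σ ω : WithTop ℕ))) {f : ℕ → Ω → ℝ} {t : ℕ}
    (hf : Integrable (f t) P) :
    Integrable (fun ω => if t = σ ω then f t ω else 0) P := by
  have h : (fun ω => if t = σ ω then f t ω else 0) = Set.indicator {ω | σ ω = t} (f t) := by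
    funext ω
    simp only [Set.indicator_apply, Set.mem_setOf_eq]
    exact if_congr eq_comm rfl rfl
  rw [h]
  exact hf.indicator (aux_meas hσ t)

private lemma aux_int (hσ : IsStoppingTime 𝓕 (fun ω => (σ ω : WithTop ℕ))) (f : ℕ → Ω → ℝ)
    (hf : ∀ t, t ≤ T → Integrable (f t) P) :
    Integrable (fun ω => if σ ω ≤ T then f (σ ω) ω else 0) P := by
  simp_rw [aux_split f]
  exact integrable_finset_sum _ fun t ht =>
    aux_term_int hσ (hf t (Nat.lt_succ_iff.mp (Finset.mem_range.mp ht)))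

private lemma aux_integral (hσ : IsStoppingTime 𝓕 (fun ω => (σ ω : WithTop ℕ))) (f : ℕ → Ω → ℝ)
    (hf : ∀ t, t ≤ T → Integrable (f t) P) :
    ∫ ω, (if σ ω ≤ T then f (σ ω) ω else 0) ∂P
      = ∑ t ∈ Finset.range (T + 1), ∫ ω in {ω | σ ω = t}, f t ω ∂P := by
  simp_rw [aux_split f]
  rw [integral_finset_sum _ fun t ht =>
    aux_term_int hσ (hf t (Nat.lt_succ_iff.mp (Finset.mem_range.mp ht)))]
  refine Finset.sum_congr rfl fun t _ => ?_
  rw [← integral_indicator (aux_meas hσ t)]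
  refine integral_congr_ae (Filter.Eventually.of_forall fun ω => ?_)
  simp only [Set.indicator_apply, Set.mem_setOf_eq]
  exact if_congr eq_comm rfl rfl

private lemma aux_p_zero (hσ : IsStoppingTime 𝓕 (fun ω => (σ ω : WithTop ℕ))) (p : ℕ → Ω → ℝ)
    (hp : ∀ t, t ≤ T → Integrable (p t) P ∧ (P[p t | 𝓕 t]) =ᵐ[P] 0) :
    ∫ ω, (if σ ω ≤ T then p (σ ω) ω else 0) ∂P = 0 := by
  rw [aux_integral hσ p fun t ht => (hp t ht).1]
  refine Finset.sum_eq_zero fun t ht => ?_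
  have ht' : t ≤ T := Nat.lt_succ_iff.mp (Finset.mem_range.mp ht)
  rw [← setIntegral_condExp (𝓕.le t) (hp t ht').1 (aux_meq hσ t)]
  calc ∫ ω in {ω | σ ω = t}, (P[p t | 𝓕 t]) ω ∂P
      = ∫ ω in {ω | σ ω = t}, (0 : ℝ) ∂P :=
        integral_congr_ae (ae_restrict_of_ae (hp t ht').2)
    _ = 0 := by simp

private lemma aux_split_add (hσ : IsStoppingTime 𝓕 (fun ω => (σ ω : WithTop ℕ))) (f g : ℕ → Ω → ℝ)
    (hf : ∀ t, t ≤ T → Integrable (f t) P) (hg : ∀ t, t ≤ T → Integrable (g t) P) :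
    ∫ ω, (if σ ω ≤ T then f (σ ω) ω + g (σ ω) ω else 0) ∂P
      = ∫ ω, (if σ ω ≤ T then f (σ ω) ω else 0) ∂P
        + ∫ ω, (if σ ω ≤ T then g (σ ω) ω else 0) ∂P := by
  rw [← integral_add (aux_int hσ f hf) (aux_int hσ g hg)]
  refine integral_congr_ae (Filter.Eventually.of_forall fun ω => ?_)
  by_cases h : σ ω ≤ T <;> simp [h]

private lemma weak_duality (hσ : IsStoppingTime 𝓕 (fun ω => (σ ω : WithTop ℕ))) (hσle : ∀ ω, σ ω ≤ T + 1)
    (R p' : ℕ → Ω → ℝ) (hRint : ∀ t, t ≤ T → Integrable (R t) P)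
    (hp' : ∀ t, t ≤ T → Integrable (p' t) P ∧ (P[p' t | 𝓕 t]) =ᵐ[P] 0)
    (y' : Ω → ℝ) (hy'int : Integrable y' P) (hy'pos : 0 ≤ᵐ[P] y')
    (hfeas : ∀ t, t ≤ T → ∀ᵐ ω ∂P, p' t ω + R t ω ≤ y' ω) :
    ∫ ω, (if σ ω ≤ T then R (σ ω) ω else 0) ∂P ≤ ∫ ω, y' ω ∂P := by
  have hkey := aux_split_add hσ p' R (fun t ht => (hp' t ht).1) hRint
  have hzero := aux_p_zero hσ p' hp'
  have hall : ∀ᵐ ω ∂P, ∀ t : Fin (T + 1), p' (t : ℕ) ω + R (t : ℕ) ω ≤ y' ω :=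
    ae_all_iff.2 fun t => hfeas t (Nat.lt_succ_iff.mp t.2)
  have hle : ∫ ω, (if σ ω ≤ T then p' (σ ω) ω + R (σ ω) ω else 0) ∂P ≤ ∫ ω, y' ω ∂P := by
    refine integral_mono_ae
      (aux_int hσ _ fun t ht => ((hp' t ht).1.add (hRint t ht))) hy'int ?_
    filter_upwards [hall, hy'pos] with ω h1 h2
    by_cases h : σ ω ≤ T
    · simpa [h] using h1 ⟨σ ω, Nat.lt_succ_of_le h⟩
    · simpa [h] using h2
  linarith

end Aux

/-- Optimal stopping duality: a stopping time `τ` is optimal for `maximize E R_τ` and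
`(p,y) ∈ X_a^⊥ × Y₊` solves the dual (`minimize E y` s.t. `p_t + R_t ≤ y` a.s. for all `t`)
with no duality gap, if and only if `p_t + R_t ≤ y` a.s. for all `t` and `p_τ + R_τ = y` a.s.
(with the convention that the reward of never stopping, `τ = T+1`, is `0`). -/
theorem stmt16 {Ω : Type*} {m0 : MeasurableSpace Ω} (P : Measure Ω) [IsProbabilityMeasure P]
    {T : ℕ} (𝓕 : Filtration ℕ m0)
    (R : ℕ → Ω → ℝ) (hRadapted : ∀ t, Measurable[𝓕 t] (R t))
    (hRint : ∀ t, t ≤ T → Integrable (R t) P)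
    (Y : Set (Ω → ℝ)) (hYmeas : ∀ y ∈ Y, Measurable y) (hYint : ∀ y ∈ Y, Integrable y P)
    -- the pathwise maximum of R belongs to Y
    (hmax : (fun ω => ⨆ t : Fin (T + 1), R t ω) ∈ Y) :
    ∀ (τ : Ω → ℕ) (p : ℕ → Ω → ℝ) (y : Ω → ℝ),
      IsStoppingTime 𝓕 (fun ω => (τ ω : WithTop ℕ)) → (∀ ω, τ ω ≤ T + 1) →
      (∀ t, t ≤ T → Integrable (p t) P ∧ (P[p t | 𝓕 t]) =ᵐ[P] 0) →
      y ∈ Y → (0 ≤ᵐ[P] y) →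
      (( -- τ is optimal among stopping times
        (∀ σ : Ω → ℕ, IsStoppingTime 𝓕 (fun ω => (σ ω : WithTop ℕ)) → (∀ ω, σ ω ≤ T + 1) →
          ∫ ω, (if σ ω ≤ T then R (σ ω) ω else 0) ∂P
            ≤ ∫ ω, (if τ ω ≤ T then R (τ ω) ω else 0) ∂P) ∧
        -- (p,y) is dual feasible and dual optimal
        (∀ t, t ≤ T → ∀ᵐ ω ∂P, p t ω + R t ω ≤ y ω) ∧
        (∀ (p' : ℕ → Ω → ℝ) (y' : Ω → ℝ),
          (∀ t, t ≤ T → Integrable (p' t) P ∧ (P[p' t | 𝓕 t]) =ᵐ[P] 0) →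
          y' ∈ Y → (0 ≤ᵐ[P] y') →
          (∀ t, t ≤ T → ∀ᵐ ω ∂P, p' t ω + R t ω ≤ y' ω) →
          ∫ ω, y ω ∂P ≤ ∫ ω, y' ω ∂P) ∧
        -- no duality gap
        ∫ ω, (if τ ω ≤ T then R (τ ω) ω else 0) ∂P = ∫ ω, y ω ∂P)
      ↔
      ((∀ t, t ≤ T → ∀ᵐ ω ∂P, p t ω + R t ω ≤ y ω) ∧
        ∀ᵐ ω ∂P, (if τ ω ≤ T then p (τ ω) ω + R (τ ω) ω else 0) = y ω)) := by
  intro τ p y hτ hτle hp hy hypos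
  have hpint : ∀ t, t ≤ T → Integrable (p t) P := fun t ht => (hp t ht).1
  have hprint : ∀ t, t ≤ T → Integrable (fun ω => p t ω + R t ω) P :=
    fun t ht => (hpint t ht).add (hRint t ht)
  have hsplit := aux_split_add hτ p R hpint hRint
  have hzero := aux_p_zero hτ p hp
  have hint : Integrable (fun ω => if τ ω ≤ T then p (τ ω) ω + R (τ ω) ω else 0) P :=
    aux_int hτ _ hprint
  constructor
  · rintro ⟨hopt, hfeas, hdopt, hgap⟩
    refine ⟨hfeas, ?_⟩
    have hall : ∀ᵐ ω ∂P, ∀ t : Fin (T + 1), p (t : ℕ) ω + R (t : ℕ) ω ≤ y ω :=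
      ae_all_iff.2 fun t => hfeas t (Nat.lt_succ_iff.mp t.2)
    have hg_nonneg :
        0 ≤ᵐ[P] fun ω => y ω - (if τ ω ≤ T then p (τ ω) ω + R (τ ω) ω else 0) := by
      filter_upwards [hall, hypos] with ω h1 h2
      by_cases h : τ ω ≤ T
      · simpa [h] using h1 ⟨τ ω, Nat.lt_succ_of_le h⟩
      · simpa [h] using h2
    have hg_int : Integrable
        (fun ω => y ω - (if τ ω ≤ T then p (τ ω) ω + R (τ ω) ω else 0)) P :=
      (hYint y hy).sub hint
    have hg_zero :
        ∫ ω, (y ω - (if τ ω ≤ T then p (τ ω) ω + R (τ ω) ω else 0)) ∂P = 0 := by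
      rw [integral_sub (hYint y hy) hint, hsplit, hzero]
      linarith
    have := (integral_eq_zero_iff_of_nonneg_ae hg_nonneg hg_int).mp hg_zero
    filter_upwards [this] with ω h
    have h' : y ω - (if τ ω ≤ T then p (τ ω) ω + R (τ ω) ω else 0) = 0 := h
    linarith
  · rintro ⟨hfeas, heq⟩
    have hgap : ∫ ω, (if τ ω ≤ T then R (τ ω) ω else 0) ∂P = ∫ ω, y ω ∂P := by
      have h1 : ∫ ω, (if τ ω ≤ T then p (τ ω) ω + R (τ ω) ω else 0) ∂P = ∫ ω, y ω ∂P :=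
        integral_congr_ae heq
      linarith
    refine ⟨fun σ hσ hσle => ?_, hfeas, fun p' y' hp' hy' hy'pos hfeas' => ?_, hgap⟩
    · rw [hgap]
      exact weak_duality hσ hσle R p hRint hp y (hYint y hy) hypos hfeas
    · rw [← hgap]
      exact weak_duality hτ hτle R p' hRint hp' y' (hYint y' hy') hy'pos hfeas'
end
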